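/- arXiv:2010.13531 — 9 statements merged into one kernel-verified Lean document; each statement's English description precedes it below -/
import Mathlib

section
/- Let V be a nonnegative real-valued random variable on a probability space with mean μ = E[V] > 0 and finite second moment E[V²] = ω² + μ² (so ω² is the variance of V), and suppose V·ln(V) is integrable (with the convention 0·ln 0 = 0). Then E[V ln V] ≤ μ · ln((ω² + μ²)/μ). -/
/-! The pointwise bound `x log x ≤ x log c + x²/c - x` (which is `log (x/c) ≤ x/c - 1` multiplied
by `x ≥ 0`) integrates, for every `c > 0`, to `E[V log V] ≤ μ log c + E[V²]/c - μ`; the choice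
`c = E[V²]/μ` cancels the last two terms. -/

open MeasureTheory Real

theorem Real.mul_log_le_mul_log_add_sq_div_sub {x c : ℝ} (hx : 0 ≤ x) (hc : 0 < c) :
    x * log x ≤ x * log c + x ^ 2 / c - x := by
  obtain rfl | hx := hx.eq_or_lt
  · simp
  have hlog : log x - log c ≤ x / c - 1 := by
    rw [← log_div hx.ne' hc.ne']
    exact log_le_sub_one_of_pos (div_pos hx hc)
  calc x * log x ≤ x * (log c + (x / c - 1)) := by gcongr; linarith
    _ = x * log c + x ^ 2 / c - x := by ring

namespace MeasureTheory

variable {α : Type*} [MeasurableSpace α] {μ : Measure α} {f : α → ℝ}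

theorem integral_sq_pos_of_integral_ne_zero (hf2 : Integrable (fun x => f x ^ 2) μ)
    (hf : ∫ x, f x ∂μ ≠ 0) : 0 < ∫ x, f x ^ 2 ∂μ := by
  refine (integral_nonneg fun x => sq_nonneg (f x)).lt_of_ne' fun h => hf ?_
  have hsq : (fun x => f x ^ 2) =ᵐ[μ] 0 :=
    (integral_eq_zero_iff_of_nonneg (fun x => sq_nonneg (f x)) hf2).1 h
  exact integral_eq_zero_of_ae (hsq.mono fun x hx => pow_eq_zero_iff two_ne_zero |>.1 hx)

theorem integral_mul_log_le_mul_log_add_integral_sq_div_sub (hf_nonneg : 0 ≤ᵐ[μ] f)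
    (hf : Integrable f μ) (hf2 : Integrable (fun x => f x ^ 2) μ)
    (hflog : Integrable (fun x => f x * log (f x)) μ) {c : ℝ} (hc : 0 < c) :
    ∫ x, f x * log (f x) ∂μ ≤ (∫ x, f x ∂μ) * log c + (∫ x, f x ^ 2 ∂μ) / c - ∫ x, f x ∂μ := by
  have hlin : Integrable (fun x => f x * log c + f x ^ 2 / c) μ :=
    (hf.mul_const _).add (hf2.div_const c)
  calc ∫ x, f x * log (f x) ∂μ ≤ ∫ x, f x * log c + f x ^ 2 / c - f x ∂μ :=
        integral_mono_ae hflog (hlin.sub hf)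
          (hf_nonneg.mono fun x hx => mul_log_le_mul_log_add_sq_div_sub hx hc)
    _ = (∫ x, f x ∂μ) * log c + (∫ x, f x ^ 2 ∂μ) / c - ∫ x, f x ∂μ := by
        rw [integral_sub hlin hf, integral_add (hf.mul_const _) (hf2.div_const c),
          integral_mul_const, integral_div]

theorem integral_mul_log_le_mul_log_integral_sq_div (hf_nonneg : 0 ≤ᵐ[μ] f)
    (hf : Integrable f μ) (hf2 : Integrable (fun x => f x ^ 2) μ)
    (hflog : Integrable (fun x => f x * log (f x)) μ) (hpos : 0 < ∫ x, f x ∂μ) :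
    ∫ x, f x * log (f x) ∂μ ≤ (∫ x, f x ∂μ) * log ((∫ x, f x ^ 2 ∂μ) / ∫ x, f x ∂μ) := by
  have hsq := integral_sq_pos_of_integral_ne_zero hf2 hpos.ne'
  have hc : 0 < (∫ x, f x ^ 2 ∂μ) / ∫ x, f x ∂μ := div_pos hsq hpos
  calc ∫ x, f x * log (f x) ∂μ ≤ _ :=
        integral_mul_log_le_mul_log_add_integral_sq_div_sub hf_nonneg hf hf2 hflog hc
    _ = (∫ x, f x ∂μ) * log ((∫ x, f x ^ 2 ∂μ) / ∫ x, f x ∂μ) := by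
        field_simp [hsq.ne']
        ring

end MeasureTheory

theorem expectation_mul_log_le_general
    {Ω : Type*} [MeasurableSpace Ω] (ℙ : Measure Ω)
    (V : Ω → ℝ) (hV : ∀ x, 0 ≤ V x)
    (μ ω2 : ℝ) (hμ : 0 < μ)
    (hVint : Integrable V ℙ) (hmean : ∫ x, V x ∂ℙ = μ)
    (hV2int : Integrable (fun x => (V x) ^ 2) ℙ)
    (hsecond : ∫ x, (V x) ^ 2 ∂ℙ = ω2 + μ ^ 2)
    (hVLint : Integrable (fun x => V x * Real.log (V x)) ℙ) :
    ∫ x, V x * Real.log (V x) ∂ℙ ≤ μ * Real.log ((ω2 + μ ^ 2) / μ) := by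
  have h := integral_mul_log_le_mul_log_integral_sq_div (ae_of_all ℙ hV) hVint hV2int hVLint
    (hmean ▸ hμ)
  rwa [hsecond, hmean] at h

/-- If `V` is a nonnegative random variable on a probability space with
mean `μ = E[V] > 0`, second moment `E[V²] = ω² + μ²`, and `V · ln V` integrable
(with the convention `0 · ln 0 = 0`, automatic since `Real.log 0 = 0`), then
`E[V ln V] ≤ μ · ln((ω² + μ²)/μ)`. -/
theorem expectation_mul_log_le
    {Ω : Type*} [MeasurableSpace Ω] (ℙ : Measure Ω) [IsProbabilityMeasure ℙ]
    (V : Ω → ℝ) (hV : ∀ x, 0 ≤ V x)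
    (μ ω2 : ℝ) (hμ : 0 < μ)
    (hVint : Integrable V ℙ) (hmean : ∫ x, V x ∂ℙ = μ)
    (hV2int : Integrable (fun x => (V x) ^ 2) ℙ)
    (hsecond : ∫ x, (V x) ^ 2 ∂ℙ = ω2 + μ ^ 2)
    (hVLint : Integrable (fun x => V x * Real.log (V x)) ℙ) :
    ∫ x, V x * Real.log (V x) ∂ℙ ≤ μ * Real.log ((ω2 + μ ^ 2) / μ) :=
  expectation_mul_log_le_general ℙ V hV μ ω2 hμ hVint hmean hV2int hsecond hVLint
end

section
/- For every integer n ≥ 1 and every real θ ∈ [0,1], the binomial expectation of y·ln y satisfies Σ_{y=1}^{n} (n choose y) · θ^y · (1−θ)^{n−y} · y · ln(y) ≤ n·θ · ln(n·θ + (1−θ)). -/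
/-!
Size-biasing rewrites `E[Y log Y]` for `Y ~ Bin(n, θ)` as `nθ · E[log (Z + 1)]` with
`Z ~ Bin(n - 1, θ)`, and Jensen's inequality for the concave `log` bounds the latter by
`log (E[Z] + 1) = log ((n - 1)θ + 1)`.
-/

open Finset Real Polynomial

section CommRing

variable {R : Type*} [CommRing R]

theorem bernsteinPolynomial_eval (n k : ℕ) (θ : R) :
    (bernsteinPolynomial R n k).eval θ = n.choose k * θ ^ k * (1 - θ) ^ (n - k) := by
  simp [bernsteinPolynomial]

theorem sum_choose_mul_pow_mul_pow (n : ℕ) (θ : R) :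
    ∑ k ∈ range (n + 1), (n.choose k : R) * θ ^ k * (1 - θ) ^ (n - k) = 1 := by
  simpa [eval_finsetSum, bernsteinPolynomial_eval] using
    congrArg (eval θ) (bernsteinPolynomial.sum R n)

theorem sum_choose_mul_pow_mul_pow_mul_self (n : ℕ) (θ : R) :
    ∑ k ∈ range (n + 1), (n.choose k : R) * θ ^ k * (1 - θ) ^ (n - k) * k = n * θ := by
  have h := congrArg (eval θ) (bernsteinPolynomial.sum_smul R n)
  simp only [nsmul_eq_mul, eval_finsetSum, eval_mul, eval_natCast, bernsteinPolynomial_eval,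
    eval_X] at h
  rw [← h]
  exact sum_congr rfl fun k _ => by ring

theorem sum_Icc_choose_mul_pow_mul_pow_mul_mul (n : ℕ) (θ : R) (g : ℕ → R) :
    ∑ y ∈ Icc 1 (n + 1), ((n + 1).choose y : R) * θ ^ y * (1 - θ) ^ (n + 1 - y) * y * g y
      = (n + 1) * θ *
        ∑ k ∈ range (n + 1), (n.choose k : R) * θ ^ k * (1 - θ) ^ (n - k) * g (k + 1) := by
  rw [← Ico_add_one_right_eq_Icc, sum_Ico_eq_sum_range, mul_sum]
  refine sum_congr (by simp) fun k _ => ?_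
  have hchoose : ((n + 1).choose (k + 1) : R) * (k + 1) = (n + 1) * n.choose k := by
    exact_mod_cast congrArg (Nat.cast (R := R)) (Nat.add_one_mul_choose_eq n k).symm
  rw [add_comm 1 k, Nat.add_sub_add_right]
  push_cast
  linear_combination θ ^ k * θ * (1 - θ) ^ (n - k) * g (k + 1) * hchoose

end CommRing

theorem ConcaveOn.sum_choose_mul_pow_mul_pow_mul_le {s : Set ℝ} {f : ℝ → ℝ}
    (hf : ConcaveOn ℝ s f) {n : ℕ} (hs : ∀ k ≤ n, (k : ℝ) ∈ s) {θ : ℝ} (hθ₀ : 0 ≤ θ)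
    (hθ₁ : θ ≤ 1) :
    ∑ k ∈ range (n + 1), (n.choose k : ℝ) * θ ^ k * (1 - θ) ^ (n - k) * f k ≤ f (n * θ) := by
  have hθ₁' : 0 ≤ 1 - θ := sub_nonneg.mpr hθ₁
  have h := hf.le_map_sum (t := range (n + 1)) (p := fun k : ℕ => (k : ℝ))
    (fun k _ => by positivity) (sum_choose_mul_pow_mul_pow n θ)
    (fun k hk => hs k (Nat.lt_succ_iff.mp (mem_range.mp hk)))
  simpa only [smul_eq_mul, sum_choose_mul_pow_mul_pow_mul_self] using h

theorem sum_choose_mul_pow_mul_pow_mul_log_succ_le (n : ℕ) {θ : ℝ} (hθ₀ : 0 ≤ θ) (hθ₁ : θ ≤ 1) :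
    ∑ k ∈ range (n + 1), (n.choose k : ℝ) * θ ^ k * (1 - θ) ^ (n - k) * log (k + 1)
      ≤ log (n * θ + 1) :=
  (strictConcaveOn_log_Ioi.concaveOn.translate_left 1).sum_choose_mul_pow_mul_pow_mul_le
    (fun k _ => by simp only [Set.mem_preimage, Set.mem_Ioi]; positivity) hθ₀ hθ₁

theorem binomial_expectation_mul_log_le_general
    (n : ℕ) (θ : ℝ) (hθ : θ ∈ Set.Icc (0 : ℝ) 1) :
    ∑ y ∈ Finset.Icc 1 n,
        (n.choose y : ℝ) * θ ^ y * (1 - θ) ^ (n - y) * (y : ℝ) * Real.log (y : ℝ)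
      ≤ (n : ℝ) * θ * Real.log ((n : ℝ) * θ + (1 - θ)) := by
  obtain ⟨hθ₀, hθ₁⟩ := hθ
  cases n with
  | zero => simp
  | succ m =>
    rw [sum_Icc_choose_mul_pow_mul_pow_mul_mul m θ (fun y => log y)]
    push_cast
    rw [show ((m : ℝ) + 1) * θ + (1 - θ) = m * θ + 1 by ring]
    exact mul_le_mul_of_nonneg_left (sum_choose_mul_pow_mul_pow_mul_log_succ_le m hθ₀ hθ₁)
      (by positivity)

/-- For `n ≥ 1` and `θ ∈ [0,1]`, the binomial expectation of `y · ln y`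
satisfies `Σ_{y=1}^{n} C(n,y) θ^y (1−θ)^{n−y} · y · ln y ≤ nθ · ln(nθ + (1−θ))`. -/
theorem binomial_expectation_mul_log_le
    (n : ℕ) (hn : 1 ≤ n) (θ : ℝ) (hθ : θ ∈ Set.Icc (0 : ℝ) 1) :
    ∑ y ∈ Finset.Icc 1 n,
        (n.choose y : ℝ) * θ ^ y * (1 - θ) ^ (n - y) * (y : ℝ) * Real.log (y : ℝ)
      ≤ (n : ℝ) * θ * Real.log ((n : ℝ) * θ + (1 - θ)) :=
  binomial_expectation_mul_log_le_general n θ hθ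
end

section
/- Let σ > 0, B > 0, P > 0, σ₀ > 0, let n ≥ 1 be an integer, and let θ ∈ ℝ be arbitrary. Set a = √(P/(B² + σ²)) and τ² = σ₀² + (n−1)·a²·σ². Then the integral over x (with respect to the Gaussian measure N(aθ, a²σ²)) of the Kullback–Leibler divergence KL( N(x + (n−1)aθ, τ²) ‖ N(n·aθ, τ² + a²σ²) ) equals (1/2)·ln(1 + a²σ²/τ²), and in particular is at most (1/2) · 1/( n − 1 + σ₀²(B² + σ²)/(P σ²) ). -/
/-!
The Kullback–Leibler divergence between two real Gaussians has the closed form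
`KL(N(m₁, v₁) ‖ N(m₂, v₂)) = (log (v₂ / v₁) + (v₁ + (m₁ - m₂)²) / v₂ - 1) / 2`, obtained by
integrating the logarithm of the ratio of the densities, a quadratic polynomial, against
`N(m₁, v₁)`. Averaging it over `x ~ N(m, w)` with means `x + c` and `m + c` and variances `v` and
`v + w` replaces `(x - m)²` by its mean `w`, so everything but `log (1 + w / v) / 2` cancels.
With `v = τ²` and `w = a²σ²` the bound follows from `log (1 + y) ≤ y`, since
`a²σ² / τ² = 1 / (n - 1 + σ₀²(B² + σ²) / (Pσ²))`.
-/

open MeasureTheory ProbabilityTheory Real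

/-- The Kullback–Leibler divergence `KL(μ ‖ ν) = ∫ log (dμ/dν) dμ` between measures on `ℝ`
(real-valued version). -/
noncomputable def klDivergence (μ ν : Measure ℝ) : ℝ :=
  ∫ x, Real.log ((μ.rnDeriv ν x).toReal) ∂μ

open scoped NNReal

lemma memLp_sub_const_gaussianReal (m c : ℝ) (v : ℝ≥0) :
    MemLp (fun x ↦ x - c) 2 (gaussianReal m v) :=
  (memLp_id_gaussianReal 2).sub (memLp_const c)

lemma integral_sq_sub_gaussianReal (m c : ℝ) (v : ℝ≥0) :
    ∫ x, (x - c) ^ 2 ∂gaussianReal m v = v + (m - c) ^ 2 := by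
  have hvar := variance_eq_sub (memLp_sub_const_gaussianReal m c v)
  have hmean : ∫ x, x - c ∂gaussianReal m v = m - c := by
    rw [integral_sub (f := fun x ↦ x) ((memLp_id_gaussianReal 1).integrable le_rfl)
      (integrable_const c)]
    simp
  rw [variance_sub_const (by fun_prop), variance_fun_id_gaussianReal, hmean] at hvar
  simp only [Pi.pow_apply] at hvar
  linarith

lemma rnDeriv_gaussianReal_gaussianReal (m₁ m₂ : ℝ) (v₁ : ℝ≥0) {v₂ : ℝ≥0} (hv₂ : v₂ ≠ 0) :
    (gaussianReal m₁ v₁).rnDeriv (gaussianReal m₂ v₂)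
      =ᵐ[volume] fun x ↦ (gaussianPDF m₂ v₂ x)⁻¹ * gaussianPDF m₁ v₁ x := by
  rw [gaussianReal_of_var_ne_zero m₂ hv₂]
  filter_upwards [Measure.rnDeriv_withDensity_right (gaussianReal m₁ v₁) volume
      (measurable_gaussianPDF m₂ v₂).aemeasurable
      (ae_of_all _ fun x ↦ (gaussianPDF_pos _ hv₂ x).ne')
      (ae_of_all _ fun _ ↦ gaussianPDF_lt_top.ne),
    rnDeriv_gaussianReal m₁ v₁] with x hx hx₁
  rw [hx, hx₁]

lemma log_gaussianPDFReal (m : ℝ) {v : ℝ≥0} (hv : v ≠ 0) (x : ℝ) :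
    log (gaussianPDFReal m v x) = -log (2 * π * v) / 2 - (x - m) ^ 2 / (2 * v) := by
  have hv' : (0 : ℝ) < v := NNReal.coe_pos.mpr (pos_iff_ne_zero.mpr hv)
  rw [gaussianPDFReal_def, log_mul (by positivity) (exp_ne_zero _), log_inv, log_exp,
    log_sqrt (by positivity)]
  ring

lemma log_rnDeriv_gaussianReal_gaussianReal (m₁ m₂ : ℝ) {v₁ v₂ : ℝ≥0} (hv₁ : v₁ ≠ 0)
    (hv₂ : v₂ ≠ 0) :
    (fun x ↦ log ((gaussianReal m₁ v₁).rnDeriv (gaussianReal m₂ v₂) x).toReal)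
      =ᵐ[gaussianReal m₁ v₁]
      fun x ↦ log (v₂ / v₁) / 2 + (x - m₂) ^ 2 / (2 * v₂) - (x - m₁) ^ 2 / (2 * v₁) := by
  have hv₁' : (0 : ℝ) < v₁ := NNReal.coe_pos.mpr (pos_iff_ne_zero.mpr hv₁)
  have hv₂' : (0 : ℝ) < v₂ := NNReal.coe_pos.mpr (pos_iff_ne_zero.mpr hv₂)
  filter_upwards [(gaussianReal_absolutelyContinuous m₁ hv₁).ae_le
    (rnDeriv_gaussianReal_gaussianReal m₁ m₂ v₁ hv₂)] with x hx
  rw [hx, ENNReal.toReal_mul, ENNReal.toReal_inv, toReal_gaussianPDF, toReal_gaussianPDF,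
    log_mul (inv_ne_zero (gaussianPDFReal_pos _ _ _ hv₂).ne') (gaussianPDFReal_pos _ _ _ hv₁).ne',
    log_inv, log_gaussianPDFReal m₁ hv₁, log_gaussianPDFReal m₂ hv₂, log_div hv₂'.ne' hv₁'.ne',
    log_mul (by positivity) hv₁'.ne', log_mul (by positivity) hv₂'.ne']
  ring

lemma klDivergence_gaussianReal (m₁ m₂ : ℝ) {v₁ v₂ : ℝ≥0} (hv₁ : v₁ ≠ 0) (hv₂ : v₂ ≠ 0) :
    klDivergence (gaussianReal m₁ v₁) (gaussianReal m₂ v₂)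
      = (log (v₂ / v₁) + (v₁ + (m₁ - m₂) ^ 2) / v₂ - 1) / 2 := by
  have hv₁' : (0 : ℝ) < v₁ := NNReal.coe_pos.mpr (pos_iff_ne_zero.mpr hv₁)
  have hsq (c : ℝ) := (memLp_sub_const_gaussianReal m₁ c v₁).integrable_sq
  rw [klDivergence, integral_congr_ae (log_rnDeriv_gaussianReal_gaussianReal m₁ m₂ hv₁ hv₂),
    integral_sub ((integrable_const _).fun_add ((hsq m₂).div_const _)) ((hsq m₁).div_const _),
    integral_add (integrable_const _) ((hsq m₂).div_const _), integral_const, integral_div,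
    integral_div, integral_sq_sub_gaussianReal, integral_sq_sub_gaussianReal]
  simp only [probReal_univ, smul_eq_mul, one_mul, sub_self]
  field_simp
  ring

lemma integral_klDivergence_gaussianReal_add (m c : ℝ) {v : ℝ≥0} (hv : v ≠ 0) (w : ℝ≥0) :
    ∫ x, klDivergence (gaussianReal (x + c) v) (gaussianReal (m + c) (v + w)) ∂gaussianReal m w
      = 1 / 2 * log (1 + w / v) := by
  have hv' : (0 : ℝ) < v := NNReal.coe_pos.mpr (pos_iff_ne_zero.mpr hv)
  have hvw : v + w ≠ 0 := (add_pos_of_pos_of_nonneg (pos_iff_ne_zero.mpr hv) w.2).ne'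
  have hsq := (memLp_sub_const_gaussianReal m m w).integrable_sq
  have hkl (x : ℝ) := klDivergence_gaussianReal (x + c) (m + c) hv hvw
  simp_rw [hkl, add_sub_add_right_eq_sub]
  rw [integral_div, integral_sub ((integrable_const _).fun_add
      (((integrable_const _).fun_add hsq).div_const _)) (integrable_const _),
    integral_add (integrable_const _) (((integrable_const _).fun_add hsq).div_const _),
    integral_div, integral_add (integrable_const _) hsq, integral_sq_sub_gaussianReal]
  simp only [integral_const, probReal_univ, smul_eq_mul, one_mul, sub_self, NNReal.coe_add]
  rw [one_add_div hv'.ne', add_comm (w : ℝ)]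
  field_simp
  ring

theorem gaussian_mutual_information_eq_and_le_general
    (σ B P σ₀ : ℝ) (hσ : 0 < σ) (hP : 0 < P) (hσ₀ : 0 < σ₀)
    (n : ℕ) (hn : 1 ≤ n) (θ : ℝ)
    (a τ2 : ℝ)
    (ha : a = Real.sqrt (P / (B ^ 2 + σ ^ 2)))
    (hτ2 : τ2 = σ₀ ^ 2 + ((n : ℝ) - 1) * a ^ 2 * σ ^ 2) :
    (∫ x, klDivergence
          (gaussianReal (x + ((n : ℝ) - 1) * a * θ) τ2.toNNReal)
          (gaussianReal ((n : ℝ) * a * θ) (τ2 + a ^ 2 * σ ^ 2).toNNReal)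
        ∂(gaussianReal (a * θ) (a ^ 2 * σ ^ 2).toNNReal))
      = (1 / 2) * Real.log (1 + a ^ 2 * σ ^ 2 / τ2)
    ∧ (∫ x, klDivergence
          (gaussianReal (x + ((n : ℝ) - 1) * a * θ) τ2.toNNReal)
          (gaussianReal ((n : ℝ) * a * θ) (τ2 + a ^ 2 * σ ^ 2).toNNReal)
        ∂(gaussianReal (a * θ) (a ^ 2 * σ ^ 2).toNNReal))
      ≤ (1 / 2) * (1 / ((n : ℝ) - 1 + σ₀ ^ 2 * (B ^ 2 + σ ^ 2) / (P * σ ^ 2))) := by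
  have ha2 : a ^ 2 = P / (B ^ 2 + σ ^ 2) := by
    rw [ha, sq_sqrt (by positivity)]
  have hn' : (0 : ℝ) ≤ (n : ℝ) - 1 := by
    rw [sub_nonneg]; exact_mod_cast hn
  have hτ2_pos : 0 < τ2 := by rw [hτ2]; positivity
  have hsignal : 0 ≤ a ^ 2 * σ ^ 2 := by positivity
  have hmean : (n : ℝ) * a * θ = a * θ + ((n : ℝ) - 1) * a * θ := by ring
  have hsnr : a ^ 2 * σ ^ 2 / τ2 = 1 / ((n : ℝ) - 1 + σ₀ ^ 2 * (B ^ 2 + σ ^ 2) / (P * σ ^ 2)) := by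
    rw [hτ2, ha2]
    field_simp
    ring
  have hI := integral_klDivergence_gaussianReal_add (a * θ) (((n : ℝ) - 1) * a * θ)
    (v := τ2.toNNReal) (toNNReal_pos.mpr hτ2_pos).ne' (a ^ 2 * σ ^ 2).toNNReal
  rw [← toNNReal_add hτ2_pos.le hsignal, ← hmean, coe_toNNReal _ hτ2_pos.le,
    coe_toNNReal _ hsignal] at hI
  refine ⟨hI, hI ▸ ?_⟩
  rw [← hsnr]
  gcongr
  linarith [log_le_sub_one_of_pos (by positivity : 0 < 1 + a ^ 2 * σ ^ 2 / τ2)]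

/-- For the Gaussian location model over-the-air scheme, with
`a = √(P/(B² + σ²))` and `τ² = σ₀² + (n−1)a²σ²`, the Gaussian average of the KL divergence
`KL(N(x + (n−1)aθ, τ²) ‖ N(naθ, τ² + a²σ²))` over `x ~ N(aθ, a²σ²)` equals
`(1/2)·ln(1 + a²σ²/τ²)`, and in particular is at most
`(1/2)·1/(n − 1 + σ₀²(B² + σ²)/(Pσ²))`. -/
theorem gaussian_mutual_information_eq_and_le
    (σ B P σ₀ : ℝ) (hσ : 0 < σ) (hB : 0 < B) (hP : 0 < P) (hσ₀ : 0 < σ₀)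
    (n : ℕ) (hn : 1 ≤ n) (θ : ℝ)
    (a τ2 : ℝ)
    (ha : a = Real.sqrt (P / (B ^ 2 + σ ^ 2)))
    (hτ2 : τ2 = σ₀ ^ 2 + ((n : ℝ) - 1) * a ^ 2 * σ ^ 2) :
    (∫ x, klDivergence
          (gaussianReal (x + ((n : ℝ) - 1) * a * θ) τ2.toNNReal)
          (gaussianReal ((n : ℝ) * a * θ) (τ2 + a ^ 2 * σ ^ 2).toNNReal)
        ∂(gaussianReal (a * θ) (a ^ 2 * σ ^ 2).toNNReal))
      = (1 / 2) * Real.log (1 + a ^ 2 * σ ^ 2 / τ2)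
    ∧ (∫ x, klDivergence
          (gaussianReal (x + ((n : ℝ) - 1) * a * θ) τ2.toNNReal)
          (gaussianReal ((n : ℝ) * a * θ) (τ2 + a ^ 2 * σ ^ 2).toNNReal)
        ∂(gaussianReal (a * θ) (a ^ 2 * σ ^ 2).toNNReal))
      ≤ (1 / 2) * (1 / ((n : ℝ) - 1 + σ₀ ^ 2 * (B ^ 2 + σ ^ 2) / (P * σ ^ 2))) :=
  gaussian_mutual_information_eq_and_le_general σ B P σ₀ hσ hP hσ₀ n hn θ a τ2 ha hτ2
end

section
/- Let σ > 0, B > 0, P > 0, σ₀ > 0, let n ≥ 1 and d ≥ 1 be integers, and let θ ∈ ℝ^d. Let U_{ij} (1 ≤ i ≤ n, 1 ≤ j ≤ d) be independent random variables with U_{ij} ~ N(θ_j, σ²), and let Z_1, …, Z_d be independent N(0, σ₀²) variables independent of the U_{ij}. Set a = √(P/(B² + σ²)), Y_j = a·Σ_{i=1}^n U_{ij} + Z_j, and θ̂_j = Y_j/(n·a). Then E[ Σ_{j=1}^d (θ̂_j − θ_j)² ] = (d σ² / n) · ( 1 + (σ₀²/(nP)) · (1 + B²/σ²) ). In particular,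 the supremum of this mean squared error over all θ with ‖θ‖₂ ≤ B√d equals (d σ²/n)(1 + (σ₀²/(nP))(1 + B²/σ²)). -/
/-!
In coordinate `j` the estimation error splits as `(Ū_j - θ_j) + Z_j / (n a)`, where `Ū_j` is the
sample mean of the `U_{ij}`. The two summands are independent, the first is unbiased with variance
`σ² / n` and the second is centred with variance `σ₀² / (n a)²`, so the mean squared error of
coordinate `j` is `σ² / n + σ₀² (B² + σ²) / (n² P)`, whatever `θ` is. Summing over the `d`
coordinates gives the risk; being constant in `θ`, it is also its supremum over the ball.
-/

open MeasureTheory ProbabilityTheory Real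

/-- The mean squared error of the over-the-air estimator `θ̂_j = Y_j/(n a)` with
`Y_j = a Σ_i U_{ij} + Z_j`, where the `U_{ij} ~ N(θ_j, σ²)` and `Z_j ~ N(0, σ₀²)`
are all independent, and `a = √(P/(B² + σ²))`. -/
noncomputable def gaussianOTARisk (σ B P σ₀ : ℝ) (n d : ℕ) (θ : Fin d → ℝ) : ℝ :=
  ∫ p : (Fin n → Fin d → ℝ) × (Fin d → ℝ),
      ∑ j, ((Real.sqrt (P / (B ^ 2 + σ ^ 2)) * ∑ i, p.1 i j + p.2 j) /
              ((n : ℝ) * Real.sqrt (P / (B ^ 2 + σ ^ 2))) - θ j) ^ 2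
    ∂((Measure.pi fun _ : Fin n =>
          Measure.pi fun j : Fin d => gaussianReal (θ j) (σ ^ 2).toNNReal).prod
        (Measure.pi fun _ : Fin d => gaussianReal 0 (σ₀ ^ 2).toNNReal))

open scoped NNReal ENNReal

section Moments

variable {Ω Ω' : Type*} {mΩ : MeasurableSpace Ω} {mΩ' : MeasurableSpace Ω'}
  {μ : Measure Ω} {ν : Measure Ω'} [IsProbabilityMeasure μ] [IsProbabilityMeasure ν]
  {f : Ω → ℝ} {g : Ω' → ℝ}

lemma integral_sq_eq_variance_add_sq (hf : MemLp f 2 μ) :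
    ∫ x, f x ^ 2 ∂μ = Var[f; μ] + (∫ x, f x ∂μ) ^ 2 := by
  rw [variance_eq_sub hf]
  simp only [Pi.pow_apply, sub_add_cancel]

omit [IsProbabilityMeasure μ] in
lemma MeasureTheory.MemLp.div_const {p : ℝ≥0∞} (hf : MemLp f p μ) (c : ℝ) :
    MemLp (fun x ↦ f x / c) p μ := by
  simpa only [div_eq_mul_inv] using hf.mul_const c⁻¹

omit [IsProbabilityMeasure μ] in
lemma variance_div_const (f : Ω → ℝ) (c : ℝ) :
    Var[fun x ↦ f x / c; μ] = Var[f; μ] / c ^ 2 := by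
  simp_rw [div_eq_mul_inv, variance_mul_const, inv_pow]

lemma integral_add_prod (hf : Integrable f μ) (hg : Integrable g ν) :
    ∫ q, f q.1 + g q.2 ∂μ.prod ν = ∫ x, f x ∂μ + ∫ y, g y ∂ν := by
  rw [integral_add (hf.comp_fst ν) (hg.comp_snd μ), integral_fun_fst, integral_fun_snd]
  simp

lemma integral_sq_add_prod (hf : MemLp f 2 μ) (hg : MemLp g 2 ν) :
    ∫ q, (f q.1 + g q.2) ^ 2 ∂μ.prod ν
      = Var[f; μ] + Var[g; ν] + (∫ x, f x ∂μ + ∫ y, g y ∂ν) ^ 2 := by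
  have hfg : MemLp (fun q : Ω × Ω' ↦ f q.1 + g q.2) 2 (μ.prod ν) :=
    (hf.comp_fst ν).add (hg.comp_snd μ)
  rw [integral_sq_eq_variance_add_sq hfg, variance_add_prod hf hg,
    integral_add_prod (hf.integrable one_le_two) (hg.integrable one_le_two)]

end Moments

section IIDSum

variable {Ω ι : Type*} {mΩ : MeasurableSpace Ω} {μ : Measure Ω} [IsProbabilityMeasure μ]
  [Fintype ι] {f : Ω → ℝ}

lemma memLp_sum_pi {p : ℝ≥0∞} (hf : MemLp f p μ) :
    MemLp (fun x : ι → Ω ↦ ∑ i, f (x i)) p (Measure.pi fun _ ↦ μ) :=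
  memLp_finsetSum _ fun i _ ↦ hf.comp_measurePreserving (measurePreserving_eval _ i)

lemma integral_sum_pi (hf : Integrable f μ) :
    ∫ x : ι → Ω, ∑ i, f (x i) ∂(Measure.pi fun _ ↦ μ) = Fintype.card ι * ∫ x, f x ∂μ := by
  refine (integral_finsetSum _ fun i _ ↦
    (measurePreserving_eval _ i).integrable_comp_of_integrable hf).trans ?_
  rw [Finset.sum_congr rfl fun i _ ↦
    (measurePreserving_eval (fun _ ↦ μ) i).hasLaw.integral_comp hf.aestronglyMeasurable]
  simp

lemma variance_sum_pi_const (hf : MemLp f 2 μ) :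
    Var[fun x : ι → Ω ↦ ∑ i, f (x i); Measure.pi fun _ ↦ μ] = Fintype.card ι * Var[f; μ] := by
  have := variance_sum_pi (μ := fun _ : ι ↦ μ) fun _ ↦ hf
  simp only [Finset.sum_fn] at this
  simp [this]

end IIDSum

section SampleMean

variable {Ω : Type*} {mΩ : MeasurableSpace Ω} {μ : Measure Ω} [IsProbabilityMeasure μ]
  {f : Ω → ℝ} {n : ℕ}

lemma integral_sampleMean (hf : Integrable f μ) (hn : n ≠ 0) :
    ∫ x : Fin n → Ω, (∑ i, f (x i)) / n ∂(Measure.pi fun _ ↦ μ) = ∫ x, f x ∂μ := by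
  rw [integral_div, integral_sum_pi hf, Fintype.card_fin]
  field_simp

lemma variance_sampleMean (hf : MemLp f 2 μ) :
    Var[fun x : Fin n → Ω ↦ (∑ i, f (x i)) / n; Measure.pi fun _ ↦ μ] = Var[f; μ] / n := by
  rw [variance_div_const, variance_sum_pi_const hf, Fintype.card_fin]
  rcases eq_or_ne (n : ℝ) 0 with hn | hn
  · simp [hn]
  · field_simp

end SampleMean

section OverTheAir

variable {ι : Type*} {ρ τ : Measure (ι → ℝ)} [IsProbabilityMeasure ρ]
  [IsProbabilityMeasure τ] {n : ℕ} {a : ℝ} {θ : ι → ℝ} {j : ι}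

lemma memLp_overTheAirError (hU : MemLp (fun u : ι → ℝ ↦ u j) 2 ρ)
    (hZ : MemLp (fun z : ι → ℝ ↦ z j) 2 τ) :
    MemLp (fun p : (Fin n → ι → ℝ) × (ι → ℝ) ↦ (a * ∑ i, p.1 i j + p.2 j) / (n * a) - θ j) 2
      ((Measure.pi fun _ ↦ ρ).prod τ) :=
  ((((memLp_sum_pi hU).comp_fst τ).const_mul a).add (hZ.comp_snd _)).div_const _ |>.sub
    (memLp_const _)

lemma integral_sq_overTheAirError (hn : n ≠ 0) (ha : a ≠ 0)
    (hU : MemLp (fun u : ι → ℝ ↦ u j) 2 ρ) (hθ : ∫ u, u j ∂ρ = θ j)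
    (hZ : MemLp (fun z : ι → ℝ ↦ z j) 2 τ) (hZ₀ : ∫ z, z j ∂τ = 0) :
    ∫ p : (Fin n → ι → ℝ) × (ι → ℝ), ((a * ∑ i, p.1 i j + p.2 j) / (n * a) - θ j) ^ 2
        ∂(Measure.pi fun _ ↦ ρ).prod τ
      = Var[fun u ↦ u j; ρ] / n + Var[fun z ↦ z j; τ] / (n * a) ^ 2 := by
  have hn' : (n : ℝ) ≠ 0 := Nat.cast_ne_zero.mpr hn
  have hsplit : ∀ p : (Fin n → ι → ℝ) × (ι → ℝ), (a * ∑ i, p.1 i j + p.2 j) / (n * a) - θ j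
      = ((∑ i, p.1 i j) / n - θ j) + p.2 j / (n * a) := fun p ↦ by
    field_simp
    ring
  have hmean : MemLp (fun x : Fin n → ι → ℝ ↦ (∑ i, x i j) / n) 2 (Measure.pi fun _ ↦ ρ) :=
    (memLp_sum_pi hU).div_const _
  have hf : MemLp (fun x : Fin n → ι → ℝ ↦ (∑ i, x i j) / n - θ j) 2 (Measure.pi fun _ ↦ ρ) :=
    hmean.sub (memLp_const _)
  simp_rw [hsplit]
  rw [integral_sq_add_prod hf (hZ.div_const (n * a)),
    variance_sub_const hmean.aestronglyMeasurable, variance_sampleMean hU, variance_div_const,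
    integral_sub (hmean.integrable one_le_two) (integrable_const _),
    integral_sampleMean (hU.integrable one_le_two) hn, hθ, integral_div, hZ₀]
  simp

lemma integral_sum_sq_overTheAirError [Fintype ι] (hn : n ≠ 0) (ha : a ≠ 0)
    (hU : ∀ j, MemLp (fun u : ι → ℝ ↦ u j) 2 ρ) (hθ : ∀ j, ∫ u, u j ∂ρ = θ j)
    (hZ : ∀ j, MemLp (fun z : ι → ℝ ↦ z j) 2 τ) (hZ₀ : ∀ j, ∫ z, z j ∂τ = 0) :
    ∫ p : (Fin n → ι → ℝ) × (ι → ℝ), ∑ j, ((a * ∑ i, p.1 i j + p.2 j) / (n * a) - θ j) ^ 2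
        ∂(Measure.pi fun _ ↦ ρ).prod τ
      = ∑ j, (Var[fun u ↦ u j; ρ] / n + Var[fun z ↦ z j; τ] / (n * a) ^ 2) := by
  rw [integral_finsetSum _ fun j _ ↦ (memLp_overTheAirError (hU j) (hZ j)).integrable_sq]
  exact Finset.sum_congr rfl fun j _ ↦
    integral_sq_overTheAirError hn ha (hU j) (hθ j) (hZ j) (hZ₀ j)

end OverTheAir

section Gaussian

variable {ι : Type*} [Fintype ι] (m : ι → ℝ) (v : ℝ≥0) (j : ι)

lemma memLp_eval_pi_gaussianReal :
    MemLp (fun u : ι → ℝ ↦ u j) 2 (Measure.pi fun l ↦ gaussianReal (m l) v) :=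
  (memLp_id_gaussianReal 2).comp_measurePreserving (measurePreserving_eval _ j)

lemma integral_eval_pi_gaussianReal :
    ∫ u, u j ∂(Measure.pi fun l ↦ gaussianReal (m l) v) = m j :=
  (measurePreserving_eval (fun l ↦ gaussianReal (m l) v) j).hasLaw.integral_eq.trans
    integral_id_gaussianReal

lemma variance_eval_pi_gaussianReal :
    Var[fun u : ι → ℝ ↦ u j; Measure.pi fun l ↦ gaussianReal (m l) v] = v :=
  (measurePreserving_eval (fun l ↦ gaussianReal (m l) v) j).hasLaw.variance_eq.trans
    variance_id_gaussianReal

end Gaussian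

lemma gaussianOTARisk_eq (σ B P σ₀ : ℝ) {n : ℕ} (d : ℕ) (θ : Fin d → ℝ) (hn : n ≠ 0)
    (ha : √(P / (B ^ 2 + σ ^ 2)) ≠ 0) :
    gaussianOTARisk σ B P σ₀ n d θ
      = d * (σ ^ 2 / n + σ₀ ^ 2 / (n * √(P / (B ^ 2 + σ ^ 2))) ^ 2) := by
  rw [gaussianOTARisk, integral_sum_sq_overTheAirError hn ha (memLp_eval_pi_gaussianReal θ _)
    (integral_eval_pi_gaussianReal θ _) (memLp_eval_pi_gaussianReal (fun _ ↦ 0) _)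
    (integral_eval_pi_gaussianReal (fun _ ↦ 0) _)]
  simp only [variance_eval_pi_gaussianReal, Real.coe_toNNReal _ (sq_nonneg _), Finset.sum_const,
    Finset.card_univ, Fintype.card_fin, nsmul_eq_mul]

theorem gaussian_ota_risk_eq_general
    (σ B P σ₀ : ℝ) (hσ : 0 < σ) (hB : 0 < B) (hP : 0 < P)
    (n d : ℕ) (hn : 1 ≤ n) (θ : Fin d → ℝ) :
    gaussianOTARisk σ B P σ₀ n d θ
      = ((d : ℝ) * σ ^ 2 / n) * (1 + σ₀ ^ 2 / ((n : ℝ) * P) * (1 + B ^ 2 / σ ^ 2))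
    ∧ sSup ((gaussianOTARisk σ B P σ₀ n d) ''
          {θ' : Fin d → ℝ | Real.sqrt (∑ j, θ' j ^ 2) ≤ B * Real.sqrt d})
      = ((d : ℝ) * σ ^ 2 / n) * (1 + σ₀ ^ 2 / ((n : ℝ) * P) * (1 + B ^ 2 / σ ^ 2)) := by
  have hgain : 0 < P / (B ^ 2 + σ ^ 2) := by positivity
  have hrisk : ∀ θ', gaussianOTARisk σ B P σ₀ n d θ'
      = ((d : ℝ) * σ ^ 2 / n) * (1 + σ₀ ^ 2 / ((n : ℝ) * P) * (1 + B ^ 2 / σ ^ 2)) := fun θ' ↦ by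
    rw [gaussianOTARisk_eq σ B P σ₀ d θ' (by omega) (sqrt_pos.2 hgain).ne', mul_pow,
      sq_sqrt hgain.le]
    field_simp
    ring
  refine ⟨hrisk θ, ?_⟩
  have hball : {θ' : Fin d → ℝ | √(∑ j, θ' j ^ 2) ≤ B * √d}.Nonempty := ⟨0, by simp; positivity⟩
  rw [show gaussianOTARisk σ B P σ₀ n d = fun _ ↦ _ from funext hrisk, hball.image_const,
    csSup_singleton]

/-- achievability part of Lemma 1. For the Gaussian location model,
the over-the-air scheme `f*(u) = √(P/(B²+σ²))·u`, `θ̂*(Y) = Y/(n√(P/(B²+σ²)))` has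
mean squared error `(dσ²/n)(1 + (σ₀²/(nP))(1 + B²/σ²))` for every `θ ∈ ℝ^d`; in
particular its supremum over `{θ : ‖θ‖₂ ≤ B√d}` equals this value. -/
theorem gaussian_ota_risk_eq
    (σ B P σ₀ : ℝ) (hσ : 0 < σ) (hB : 0 < B) (hP : 0 < P) (hσ₀ : 0 < σ₀)
    (n d : ℕ) (hn : 1 ≤ n) (hd : 1 ≤ d) (θ : Fin d → ℝ) :
    gaussianOTARisk σ B P σ₀ n d θ
      = ((d : ℝ) * σ ^ 2 / n) * (1 + σ₀ ^ 2 / ((n : ℝ) * P) * (1 + B ^ 2 / σ ^ 2))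
    ∧ sSup ((gaussianOTARisk σ B P σ₀ n d) ''
          {θ' : Fin d → ℝ | Real.sqrt (∑ j, θ' j ^ 2) ≤ B * Real.sqrt d})
      = ((d : ℝ) * σ ^ 2 / n) * (1 + σ₀ ^ 2 / ((n : ℝ) * P) * (1 + B ^ 2 / σ ^ 2)) :=
  gaussian_ota_risk_eq_general σ B P σ₀ hσ hB hP n d hn θ
end

section
/- Let n ≥ 1 and d ≥ 1 be integers and P > 0, σ₀² > 0 reals. For reals A, B, α, β define the per-coordinate risk r_{A,B,α,β}(t) = α²·(n(B−A)²·t(1−t) + σ₀²) + (α·n·(A + (B−A)t) + β − t)² for t ∈ [0,1]. Then the infimum, over all (A, B, α, β) with A² ≤ P and B² ≤ P, of d · sup_{t ∈ [0,1]} r_{A,B,α,β}(t) equals: (d/(4(√n+1)²))·(1 + σ₀²/(nP)) if σ₀² ≤ n^{3/2} P, and (d/4)·1/(1 + n²P/σ₀²) if σ₀² ≥ n^{3/2} P. Moreover the infimum is attained at A = −√P, B = √P, β = 1/2, with α = 1/(2√(nP)(√n+1)) in the first case and α = n√P/(2(σ₀² + n²P)) in the second case. -/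
open Real

/-- Per-coordinate mean squared error of the affine estimator `αY + β` when `n` users each
transmit `A` (bit `0`) or `B` (bit `1`) over a Gaussian MAC with noise variance `σ0sq`,
the bit being Bernoulli(`t`). -/
noncomputable def perCoordRisk (n : ℕ) (σ0sq A B α β t : ℝ) : ℝ :=
  α ^ 2 * ((n : ℝ) * (B - A) ^ 2 * t * (1 - t) + σ0sq) +
    (α * (n : ℝ) * (A + (B - A) * t) + β - t) ^ 2

/-- Worst-case (over `t ∈ [0,1]`) per-coordinate risk. -/
noncomputable def worstRisk (n : ℕ) (σ0sq A B α β : ℝ) : ℝ :=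
  sSup (perCoordRisk n σ0sq A B α β '' Set.Icc (0 : ℝ) 1)

open Set

/-!
For the upper bound take the antipodal design `A = -√P`, `B = √P`, `β = 1/2`: its risk is
`α²σ₀² + (2α n √P - 1)²/4 + c · t(1-t)`, so whenever `c ≤ 0` its worst case is attained at
the endpoints, and the two announced choices of `α` make `c ≤ 0`.

For the lower bound let `W` be the worst-case risk and `u = α n (B - A)`, so that
`u² ≤ 4 n² P α²`. Averaging the risks at `t = 0` and `t = 1` gives `σ₀² u² + n² P (u - 1)² ≤ 4 n² P W`, and the risk at `t = 1/2` gives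
`(σ₀² + n P) u² ≤ 4 n² P W`. Minimising the first bound over `u` gives the high-noise value.
In the low-noise regime the first bound is still decreasing at the point `u = √n/(√n + 1)`
where it meets the increasing second one, so their maximum is at least the common value there,
which is the low-noise value.
-/

theorem perCoordRisk_le_worstRisk {n : ℕ} {S : ℝ} (A B α β : ℝ) {t : ℝ}
    (ht : t ∈ Icc (0 : ℝ) 1) :
    perCoordRisk n S A B α β t ≤ worstRisk n S A B α β := by
  have hcont : Continuous (perCoordRisk n S A B α β) := by unfold perCoordRisk; fun_prop
  exact le_csSup (isCompact_Icc.bddAbove_image hcont.continuousOn) (mem_image_of_mem _ ht)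

section Antipodal

variable {n : ℕ} {S : ℝ}

theorem perCoordRisk_antipodal (s α t : ℝ) :
    perCoordRisk n S (-s) s α (1 / 2) t =
      α ^ 2 * S + (2 * α * n * s - 1) ^ 2 / 4 +
        (4 * α ^ 2 * n * s ^ 2 - (2 * α * n * s - 1) ^ 2) * (t * (1 - t)) := by
  unfold perCoordRisk; ring

theorem worstRisk_antipodal {s α : ℝ} (h : 4 * α ^ 2 * n * s ^ 2 ≤ (2 * α * n * s - 1) ^ 2) :
    worstRisk n S (-s) s α (1 / 2) = α ^ 2 * S + (2 * α * n * s - 1) ^ 2 / 4 := by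
  refine IsGreatest.csSup_eq ⟨⟨0, by norm_num, by rw [perCoordRisk_antipodal]; ring⟩, ?_⟩
  rintro _ ⟨t, ht, rfl⟩
  rw [perCoordRisk_antipodal]
  nlinarith [mul_nonneg ht.1 (sub_nonneg.2 ht.2)]

end Antipodal

section LowerBounds

variable {n : ℕ} {S P A B : ℝ}

theorem sq_sub_le_four_mul (hA : A ^ 2 ≤ P) (hB : B ^ 2 ≤ P) : (B - A) ^ 2 ≤ 4 * P := by
  nlinarith [sq_nonneg (A + B)]

theorem mul_sq_mul_sub_le_of_sq_le (hS : 0 ≤ S) (hA : A ^ 2 ≤ P) (hB : B ^ 2 ≤ P) (α : ℝ) :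
    S * (α * n * (B - A)) ^ 2 ≤ 4 * n ^ 2 * P * (α ^ 2 * S) := by
  have := mul_le_mul_of_nonneg_left (sq_sub_le_four_mul hA hB)
    (by positivity : 0 ≤ S * α ^ 2 * (n : ℝ) ^ 2)
  linarith [show S * (α * n * (B - A)) ^ 2 = S * α ^ 2 * n ^ 2 * (B - A) ^ 2 by ring]

theorem endpoint_bound_le_worstRisk (hP : 0 ≤ P) (hS : 0 ≤ S) (hA : A ^ 2 ≤ P)
    (hB : B ^ 2 ≤ P) (α β : ℝ) :
    S * (α * n * (B - A)) ^ 2 + n ^ 2 * P * (α * n * (B - A) - 1) ^ 2 ≤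
      4 * n ^ 2 * P * worstRisk n S A B α β := by
  have h0 := perCoordRisk_le_worstRisk (n := n) (S := S) A B α β (t := 0) (by norm_num)
  have h1 := perCoordRisk_le_worstRisk (n := n) (S := S) A B α β (t := 1) (by norm_num)
  simp only [perCoordRisk] at h0 h1
  -- `x² + y² ≥ (y - x)²/2` with `y - x = α n (B - A) - 1`
  have hsum : (α * n * (B - A) - 1) ^ 2 / 2 ≤ 2 * worstRisk n S A B α β - 2 * α ^ 2 * S := by
    nlinarith [sq_nonneg (α * n * A + β + (α * n * B + β - 1))]
  nlinarith [mul_sq_mul_sub_le_of_sq_le (n := n) hS hA hB α, mul_le_mul_of_nonneg_left hsum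
    (by positivity : (0 : ℝ) ≤ 2 * n ^ 2 * P)]

theorem midpoint_bound_le_worstRisk (hP : 0 ≤ P) (hS : 0 ≤ S) (hA : A ^ 2 ≤ P)
    (hB : B ^ 2 ≤ P) (α β : ℝ) :
    S * (α * n * (B - A)) ^ 2 + n * P * (α * n * (B - A)) ^ 2 ≤
      4 * n ^ 2 * P * worstRisk n S A B α β := by
  have h := perCoordRisk_le_worstRisk (n := n) (S := S) A B α β (t := 1 / 2) (by norm_num)
  have hmid : α ^ 2 * S + α ^ 2 * n * (B - A) ^ 2 / 4 ≤ worstRisk n S A B α β := by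
    simp only [perCoordRisk] at h
    nlinarith [sq_nonneg (α * n * (A + (B - A) * (1 / 2)) + β - 1 / 2)]
  nlinarith [mul_sq_mul_sub_le_of_sq_le (n := n) hS hA hB α, mul_le_mul_of_nonneg_left hmid
    (by positivity : (0 : ℝ) ≤ 4 * n ^ 2 * P)]

end LowerBounds

theorem mul_le_add_mul_sq_add_mul_sub_one_sq {a b : ℝ} (u : ℝ) :
    a * b ≤ (a + b) * (a * u ^ 2 + b * (u - 1) ^ 2) := by
  nlinarith [sq_nonneg ((a + b) * u - b)]

theorem le_of_lowNoise_bounds {q P S u W : ℝ} (hq : 0 < q) (hP : 0 < P) (hS : 0 ≤ S)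
    (hreg : S ≤ q ^ 3 * P)
    (h₁ : S * u ^ 2 + (q ^ 2) ^ 2 * P * (u - 1) ^ 2 ≤ 4 * (q ^ 2) ^ 2 * P * W)
    (h₂ : S * u ^ 2 + q ^ 2 * P * u ^ 2 ≤ 4 * (q ^ 2) ^ 2 * P * W) :
    q ^ 2 * P + S ≤ 4 * q ^ 2 * P * (q + 1) ^ 2 * W := by
  -- the weights make the derivatives of the two bounds cancel at the crossing `u = q/(q+1)`
  have H₁ := mul_le_mul_of_nonneg_left h₁ (by positivity : 0 ≤ (S + q ^ 2 * P) * (1 + q))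
  have H₂ := mul_le_mul_of_nonneg_left h₂
    (mul_nonneg (sub_nonneg.2 hreg) (by positivity) : 0 ≤ (q ^ 3 * P - S) * (1 + q))
  have H₃ : 0 ≤ (S + q ^ 2 * P) * (q ^ 3 * P) * ((1 + q) * u - q) ^ 2 := by positivity
  have h : q ^ 4 * P * (q ^ 2 * P + S) ≤ q ^ 4 * P * (4 * q ^ 2 * P * (q + 1) ^ 2 * W) := by
    linarith
  exact le_of_mul_le_mul_left h (by positivity)

section Regimes

variable {n : ℕ} {S P : ℝ}

theorem highNoise_le_worstRisk (hn : 1 ≤ n) (hP : 0 < P) (hS : 0 ≤ S) {A B : ℝ}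
    (hA : A ^ 2 ≤ P) (hB : B ^ 2 ≤ P) (α β : ℝ) :
    S / (4 * (S + n ^ 2 * P)) ≤ worstRisk n S A B α β := by
  have hc : 0 < (n : ℝ) ^ 2 * P := mul_pos (pow_pos (by exact_mod_cast hn) 2) hP
  have h := mul_le_mul_of_nonneg_left (endpoint_bound_le_worstRisk (n := n) hP.le hS hA hB α β)
    (by positivity : 0 ≤ S + n ^ 2 * P)
  have hmin := mul_le_add_mul_sq_add_mul_sub_one_sq (a := S) (b := n ^ 2 * P) (α * n * (B - A))
  rw [div_le_iff₀ (by positivity)]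
  refine le_of_mul_le_mul_left (a := (n : ℝ) ^ 2 * P) ?_ hc
  linarith

theorem lowNoise_le_worstRisk (hn : 1 ≤ n) (hP : 0 < P) (hS : 0 ≤ S)
    (hreg : S ≤ √n ^ 3 * P) {A B : ℝ} (hA : A ^ 2 ≤ P) (hB : B ^ 2 ≤ P) (α β : ℝ) :
    (n * P + S) / (4 * n * P * (√n + 1) ^ 2) ≤ worstRisk n S A B α β := by
  have h₁ := endpoint_bound_le_worstRisk (n := n) hP.le hS hA hB α β
  have h₂ := midpoint_bound_le_worstRisk (n := n) hP.le hS hA hB α β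
  have hq : 0 < √(n : ℝ) := Real.sqrt_pos.2 (by exact_mod_cast hn)
  set q := √(n : ℝ)
  have hn' : (n : ℝ) = q ^ 2 := (Real.sq_sqrt n.cast_nonneg).symm
  rw [hn'] at h₁ h₂ ⊢
  rw [div_le_iff₀ (by positivity)]
  linarith [le_of_lowNoise_bounds hq hP hS hreg h₁ h₂]

theorem worstRisk_lowNoise_design (hn : 1 ≤ n) (hP : 0 < P) :
    worstRisk n S (-√P) √P (1 / (2 * √(n * P) * (√n + 1))) (1 / 2) =
      (n * P + S) / (4 * n * P * (√n + 1) ^ 2) := by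
  have hq : 0 < √(n : ℝ) := Real.sqrt_pos.2 (by exact_mod_cast hn)
  have hs : 0 < √P := Real.sqrt_pos.2 hP
  rw [Real.sqrt_mul n.cast_nonneg]
  set q := √(n : ℝ)
  set s := √P
  have hn' : (n : ℝ) = q ^ 2 := (Real.sq_sqrt n.cast_nonneg).symm
  have hP' : P = s ^ 2 := (Real.sq_sqrt hP.le).symm
  rw [worstRisk_antipodal]
  · rw [hn', hP']; field_simp; ring
  · -- the risk of this design does not depend on `t`
    refine le_of_eq ?_
    rw [hn']; field_simp; ring

theorem worstRisk_highNoise_design (hn : 1 ≤ n) (hP : 0 < P) (hS : 0 ≤ S)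
    (hreg : √n ^ 3 * P ≤ S) :
    worstRisk n S (-√P) √P (n * √P / (2 * (S + n ^ 2 * P))) (1 / 2) =
      S / (4 * (S + n ^ 2 * P)) := by
  have hq : 0 < √(n : ℝ) := Real.sqrt_pos.2 (by exact_mod_cast hn)
  have hs : 0 < √P := Real.sqrt_pos.2 hP
  set q := √(n : ℝ)
  set s := √P
  have hn' : (n : ℝ) = q ^ 2 := (Real.sq_sqrt n.cast_nonneg).symm
  have hP' : P = s ^ 2 := (Real.sq_sqrt hP.le).symm
  rw [worstRisk_antipodal]
  · rw [hn', hP']; field_simp; ring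
  · rw [hP'] at hreg
    have hsq := pow_le_pow_left₀ (by positivity) hreg 2
    rw [hn', hP']
    field_simp
    linear_combination 4 * hsq

end Regimes

theorem sInf_eq_of_le_worstRisk_of_eq {n d : ℕ} {S P V α₀ : ℝ} (hP : 0 ≤ P)
    (hlow : ∀ A B α β, A ^ 2 ≤ P → B ^ 2 ≤ P → V ≤ worstRisk n S A B α β)
    (hatt : worstRisk n S (-√P) √P α₀ (1 / 2) = V) :
    sInf {x : ℝ | ∃ A B α β : ℝ, A ^ 2 ≤ P ∧ B ^ 2 ≤ P ∧ x = (d : ℝ) * worstRisk n S A B α β}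
      = d * V := by
  refine IsLeast.csInf_eq ⟨⟨-√P, √P, α₀, 1 / 2, by simp [sq_sqrt hP], by simp [sq_sqrt hP],
    by rw [hatt]⟩, ?_⟩
  rintro _ ⟨A, B, α, β, hA, hB, rfl⟩
  exact mul_le_mul_of_nonneg_left (hlow A B α β hA hB) d.cast_nonneg

theorem bernoulli_minimax_risk_general
    (n d : ℕ) (hn : 1 ≤ n) (P σ0sq : ℝ) (hP : 0 < P) (hσ0 : 0 < σ0sq) :
    (σ0sq ≤ (n : ℝ) ^ ((3 : ℝ) / 2) * P →
      sInf {x : ℝ | ∃ A B α β : ℝ, A ^ 2 ≤ P ∧ B ^ 2 ≤ P ∧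
            x = (d : ℝ) * worstRisk n σ0sq A B α β}
          = ((d : ℝ) / (4 * (Real.sqrt n + 1) ^ 2)) * (1 + σ0sq / ((n : ℝ) * P))
        ∧ (d : ℝ) * worstRisk n σ0sq (-Real.sqrt P) (Real.sqrt P)
              (1 / (2 * Real.sqrt ((n : ℝ) * P) * (Real.sqrt n + 1))) (1 / 2)
          = ((d : ℝ) / (4 * (Real.sqrt n + 1) ^ 2)) * (1 + σ0sq / ((n : ℝ) * P)))
    ∧ (σ0sq ≥ (n : ℝ) ^ ((3 : ℝ) / 2) * P →
      sInf {x : ℝ | ∃ A B α β : ℝ, A ^ 2 ≤ P ∧ B ^ 2 ≤ P ∧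
            x = (d : ℝ) * worstRisk n σ0sq A B α β}
          = ((d : ℝ) / 4) * (1 / (1 + (n : ℝ) ^ 2 * P / σ0sq))
        ∧ (d : ℝ) * worstRisk n σ0sq (-Real.sqrt P) (Real.sqrt P)
              ((n : ℝ) * Real.sqrt P / (2 * (σ0sq + (n : ℝ) ^ 2 * P))) (1 / 2)
          = ((d : ℝ) / 4) * (1 / (1 + (n : ℝ) ^ 2 * P / σ0sq))) := by
  have hrpow : (n : ℝ) ^ ((3 : ℝ) / 2) = √n ^ 3 := by
    rw [rpow_div_two_eq_sqrt _ n.cast_nonneg]; norm_cast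
  refine ⟨fun hreg => ?_, fun hreg => ?_⟩
  · rw [hrpow] at hreg
    have hV : (d : ℝ) / (4 * (√n + 1) ^ 2) * (1 + σ0sq / (n * P)) =
        d * ((n * P + σ0sq) / (4 * n * P * (√n + 1) ^ 2)) := by field_simp
    rw [hV, worstRisk_lowNoise_design hn hP]
    exact ⟨sInf_eq_of_le_worstRisk_of_eq hP.le
      (fun A B α β hA hB => lowNoise_le_worstRisk hn hP hσ0.le hreg hA hB α β)
      (worstRisk_lowNoise_design hn hP), rfl⟩
  · rw [ge_iff_le, hrpow] at hreg
    have hV : (d : ℝ) / 4 * (1 / (1 + n ^ 2 * P / σ0sq)) =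
        d * (σ0sq / (4 * (σ0sq + n ^ 2 * P))) := by field_simp
    rw [hV, worstRisk_highNoise_design hn hP hσ0.le hreg]
    exact ⟨sInf_eq_of_le_worstRisk_of_eq hP.le
      (fun A B α β hA hB => highNoise_le_worstRisk hn hP hσ0.le hA hB α β)
      (worstRisk_highNoise_design hn hP hσ0.le hreg), rfl⟩

/-- Lemma 2. The minimax mean squared error, over `θ ∈ [0,1]^d`, for the
product Bernoulli model with two-valued encodings satisfying the power constraint
`A², B² ≤ P` and affine estimators, equals `(d/(4(√n+1)²))(1 + σ₀²/(nP))` when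
`σ₀² ≤ n^{3/2}P` and `(d/4)/(1 + n²P/σ₀²)` when `σ₀² ≥ n^{3/2}P`, attained at
`A = −√P`, `B = √P`, `β = 1/2`, and `α = 1/(2√(nP)(√n+1))` resp. `α = n√P/(2(σ₀²+n²P))`. -/
theorem bernoulli_minimax_risk
    (n d : ℕ) (hn : 1 ≤ n) (hd : 1 ≤ d) (P σ0sq : ℝ) (hP : 0 < P) (hσ0 : 0 < σ0sq) :
    (σ0sq ≤ (n : ℝ) ^ ((3 : ℝ) / 2) * P →
      sInf {x : ℝ | ∃ A B α β : ℝ, A ^ 2 ≤ P ∧ B ^ 2 ≤ P ∧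
            x = (d : ℝ) * worstRisk n σ0sq A B α β}
          = ((d : ℝ) / (4 * (Real.sqrt n + 1) ^ 2)) * (1 + σ0sq / ((n : ℝ) * P))
        ∧ (d : ℝ) * worstRisk n σ0sq (-Real.sqrt P) (Real.sqrt P)
              (1 / (2 * Real.sqrt ((n : ℝ) * P) * (Real.sqrt n + 1))) (1 / 2)
          = ((d : ℝ) / (4 * (Real.sqrt n + 1) ^ 2)) * (1 + σ0sq / ((n : ℝ) * P)))
    ∧ (σ0sq ≥ (n : ℝ) ^ ((3 : ℝ) / 2) * P →
      sInf {x : ℝ | ∃ A B α β : ℝ, A ^ 2 ≤ P ∧ B ^ 2 ≤ P ∧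
            x = (d : ℝ) * worstRisk n σ0sq A B α β}
          = ((d : ℝ) / 4) * (1 / (1 + (n : ℝ) ^ 2 * P / σ0sq))
        ∧ (d : ℝ) * worstRisk n σ0sq (-Real.sqrt P) (Real.sqrt P)
              ((n : ℝ) * Real.sqrt P / (2 * (σ0sq + (n : ℝ) ^ 2 * P))) (1 / 2)
          = ((d : ℝ) / 4) * (1 / (1 + (n : ℝ) ^ 2 * P / σ0sq))) :=
  bernoulli_minimax_risk_general n d hn P σ0sq hP hσ0
end

section
/- Let n, d, m be positive integers with 2m ≤ d, and let P > 0, σ₀² > 0 satisfy (d²/(4m(d−m)))·σ₀² ≤ n^{3/2}·P. For reals A, B, α, β define the per-coordinate risk r_{A,B,α,β}(t) = α²·(n(B−A)²·t(1−t) + σ₀²) + (α·n·(A + (B−A)t) + β − t)² for t ∈ [0,1], and let Θ_m = { θ ∈ [0,1]^d : Σ_{j=1}^d θ_j ≤ m }. Then the infimum, over all (A, B, α, β) such that Σ_{j=1}^d (θ_j B² + (1−θ_j) A²) ≤ dP for every θ ∈ Θ_m, of sup_{θ ∈ Θ_m} Σ_{j=1}^d r_{A,B,α,β}(θ_j) equals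 (m/(√n+1)²) · ( (d−m)/d + d σ₀² / ( m n P (√((d−m)/m) + √(m/(d−m)))² ) ). Moreover the infimum is attained at A = −√(mP/(d−m)), B = √((d−m)P/m), α = 1/( √(nP)·(√((d−m)/m)+√(m/(d−m)))·(√n+1) ), and β = (1 − 2m/d)·(n√P/2)·(√((d−m)/m)+√(m/(d−m)))·α + m/d − (n√P/2)·(√((d−m)/m) − √(m/(d−m)))·α. -/
open Real

/-- The parameter set of the `m`-sparse product Bernoulli model. -/
def sparseParams (d : ℕ) (m : ℕ) : Set (Fin d → ℝ) :=
  {θ | (∀ j, θ j ∈ Set.Icc (0 : ℝ) 1) ∧ ∑ j, θ j ≤ (m : ℝ)}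

/-- Worst-case (over `θ ∈ Θ_m`) total risk of the affine estimator. -/
noncomputable def sparseWorstRisk (n d m : ℕ) (σ0sq A B α β : ℝ) : ℝ :=
  sSup ((fun θ : Fin d → ℝ => ∑ j, perCoordRisk n σ0sq A B α β (θ j)) '' sparseParams d m)

/-!
Write `p = m/d` and let `u = αn(B - A)` be the gain of the estimator on the signal. Each
coordinate risk is `α²σ₀² + t(1-t)u²/n + (c + (u-1)t)²`. Comparing the worst case with the
vertex `(1,…,1,0,…,0)` and with the centre `(p,…,p)` of `Θ_m` bounds it below by
`d(α²σ₀² + p(1-p)·max((u-1)², u²/n))`, and the power constraint at the centre gives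
`p(1-p)(B-A)² ≤ P`, hence `α²σ₀² ≥ p(1-p)·σ₀²u²/(n²P)`. The resulting one-variable bound is
minimised at the kink `u = √n/(√n+1)` exactly when `√n σ₀² ≤ n²P`, which the low-noise
hypothesis guarantees. The stated estimator has this gain and bias `p/(√n+1)`, so its risk is
affine in `θ_j` with nonnegative slope `(1-2p)/(√n+1)²`; its worst case is attained at the
centre and matches the lower bound.
-/

open Finset

section SparseParams

variable {d m : ℕ}

def sparseVertex (d m : ℕ) : Fin d → ℝ := fun j => if (j : ℕ) < m then 1 else 0

theorem sparseVertex_mem_sparseParams (hmd : m ≤ d) : sparseVertex d m ∈ sparseParams d m := by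
  refine ⟨fun j => ?_, ?_⟩
  · unfold sparseVertex; split_ifs <;> norm_num
  · simp [sparseVertex, Fin.card_filter_val_lt, min_eq_right hmd]

theorem sum_comp_sparseVertex (hmd : m ≤ d) (f : ℝ → ℝ) :
    ∑ j, f (sparseVertex d m j) = m * f 1 + ((d : ℝ) - m) * f 0 := by
  have hcard : #{j : Fin d | ¬ (j : ℕ) < m} = d - m := by
    rw [filter_not, card_sdiff_of_subset (filter_subset _ _), Fin.card_filter_val_lt,
      min_eq_right hmd, card_univ, Fintype.card_fin]
  simp only [sparseVertex, apply_ite f, sum_ite, sum_const, Fin.card_filter_val_lt,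
    min_eq_right hmd, hcard, nsmul_eq_mul, Nat.cast_sub hmd]

theorem natCast_mul_div_natCast (hmd : m ≤ d) : (d : ℝ) * (m / d) = m := by
  rcases Nat.eq_zero_or_pos d with rfl | hd
  · simp [Nat.le_zero.1 hmd]
  · field_simp

theorem div_mul_one_sub_div_nonneg (hmd : m ≤ d) : (0 : ℝ) ≤ m / d * (1 - m / d) :=
  mul_nonneg (by positivity)
    (sub_nonneg.2 (div_le_one_of_le₀ (by exact_mod_cast hmd) (by positivity)))

theorem const_mem_sparseParams (hmd : m ≤ d) : (fun _ => (m : ℝ) / d) ∈ sparseParams d m := by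
  refine ⟨fun _ => ⟨by positivity, div_le_one_of_le₀ (by exact_mod_cast hmd) (by positivity)⟩, ?_⟩
  rw [sum_const, card_univ, Fintype.card_fin, nsmul_eq_mul]
  exact (natCast_mul_div_natCast hmd).le

theorem bddAbove_image_sum_sparseParams {f : ℝ → ℝ} (hf : Continuous f) :
    BddAbove ((fun θ : Fin d → ℝ => ∑ j, f (θ j)) '' sparseParams d m) := by
  refine ((isCompact_Icc (a := (0 : Fin d → ℝ)) (b := 1)).image
    (f := fun θ => ∑ j, f (θ j)) (by fun_prop)).bddAbove.mono ?_
  exact Set.image_mono fun θ hθ => ⟨fun j => (hθ.1 j).1, fun j => (hθ.1 j).2⟩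

theorem isGreatest_image_sum_affine (hmd : m ≤ d) {a b : ℝ} (hb : 0 ≤ b) :
    IsGreatest ((fun θ : Fin d → ℝ => ∑ j, (a + b * θ j)) '' sparseParams d m) (d * a + b * m) := by
  have hsum (θ : Fin d → ℝ) : ∑ j, (a + b * θ j) = d * a + b * ∑ j, θ j := by
    simp [sum_add_distrib, mul_sum]
  refine ⟨⟨fun _ => (m : ℝ) / d, const_mem_sparseParams hmd, ?_⟩, ?_⟩
  · simp only [hsum, sum_const, card_univ, Fintype.card_fin, nsmul_eq_mul,
      natCast_mul_div_natCast hmd]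
  · rintro _ ⟨θ, hθ, rfl⟩
    simp only [hsum]
    gcongr
    exact hθ.2

end SparseParams

section PerCoordRisk

variable {n : ℕ} {σ0sq A B α β : ℝ}

theorem continuous_perCoordRisk : Continuous (perCoordRisk n σ0sq A B α β) := by
  unfold perCoordRisk; fun_prop

theorem perCoordRisk_eq (t : ℝ) :
    perCoordRisk n σ0sq A B α β t = α ^ 2 * σ0sq + t * (1 - t) * (α * n * (B - A)) ^ 2 / n
      + (α * n * A + β + (α * n * (B - A) - 1) * t) ^ 2 := by
  rcases eq_or_ne (n : ℝ) 0 with hn | hn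
  · simp [perCoordRisk, hn, sub_eq_add_neg]
  · unfold perCoordRisk
    field_simp
    ring

theorem perCoordRisk_convexComb (p : ℝ) :
    p * perCoordRisk n σ0sq A B α β 1 + (1 - p) * perCoordRisk n σ0sq A B α β 0
      = α ^ 2 * σ0sq + p * (1 - p) * (α * n * (B - A) - 1) ^ 2
        + (α * n * A + β + (α * n * (B - A) - 1) * p) ^ 2 := by
  unfold perCoordRisk
  ring

theorem perCoordRisk_eq_of_slope_bias (hn : 0 < n) {p : ℝ}
    (hslope : α * n * (B - A) = √n / (√n + 1)) (hbias : α * n * A + β = p / (√n + 1)) (t : ℝ) :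
    perCoordRisk n σ0sq A B α β t
      = (α ^ 2 * σ0sq + p ^ 2 / (√n + 1) ^ 2) + (1 - 2 * p) / (√n + 1) ^ 2 * t := by
  have hnR : (0 : ℝ) < n := Nat.cast_pos.2 hn
  have hpos : 0 < √(n : ℝ) := Real.sqrt_pos.2 hnR
  rw [perCoordRisk_eq, hslope, hbias]
  field_simp
  rw [Real.sq_sqrt hnR.le]
  ring

theorem mul_noise_le_of_spread_le (hn : 0 < n) {p P : ℝ} (hP : 0 < P) (hσ : 0 ≤ σ0sq)
    (hspread : p * (1 - p) * (B - A) ^ 2 ≤ P) :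
    p * (1 - p) * (σ0sq / (n ^ 2 * P) * (α * n * (B - A)) ^ 2) ≤ α ^ 2 * σ0sq := by
  have hnR : (n : ℝ) ≠ 0 := Nat.cast_ne_zero.2 hn.ne'
  calc _ = α ^ 2 * σ0sq / P * (p * (1 - p) * (B - A) ^ 2) := by field_simp
    _ ≤ α ^ 2 * σ0sq / P * P := by gcongr
    _ = α ^ 2 * σ0sq := by field_simp

end PerCoordRisk

theorem mul_one_sub_mul_sq_sub_le (p A B : ℝ) :
    p * (1 - p) * (B - A) ^ 2 ≤ p * B ^ 2 + (1 - p) * A ^ 2 := by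
  nlinarith [sq_nonneg (p * B + (1 - p) * A)]

theorem le_mul_sq_add_max {t ρ : ℝ} (ht : 0 < t) (hρ : 0 ≤ ρ) (htρ : t * ρ ≤ 1) (u : ℝ) :
    (1 + t ^ 2 * ρ) / (t + 1) ^ 2 ≤ ρ * u ^ 2 + max ((u - 1) ^ 2) ((u / t) ^ 2) := by
  rw [div_le_iff₀ (by positivity)]
  rcases le_total u (t / (t + 1)) with hu | hu
  · -- `t ρ ≤ 1` puts the minimum of `ρ u² + (u - 1)²` to the right of the kink `t / (t + 1)`
    have hu' : u * (t + 1) ≤ t := by rwa [le_div_iff₀ (by positivity)] at hu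
    have := le_max_left ((u - 1) ^ 2) ((u / t) ^ 2)
    nlinarith [mul_nonneg (sub_nonneg.2 hu') (sub_nonneg.2 htρ), sq_nonneg (t - u * (t + 1))]
  · have hut : 1 ≤ (u / t) * (t + 1) := by
      rwa [div_mul_eq_mul_div, le_div_iff₀ ht, one_mul, ← div_le_iff₀ (by positivity)]
    have := le_max_right ((u - 1) ^ 2) ((u / t) ^ 2)
    have hρu : ρ * u ^ 2 * (t + 1) ^ 2 = t ^ 2 * ρ * ((u / t) * (t + 1)) ^ 2 := by
      field_simp
    nlinarith [mul_le_mul_of_nonneg_left (one_le_pow₀ (n := 2) hut) (by positivity : 0 ≤ t ^ 2 * ρ),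
      one_le_pow₀ (n := 2) hut]

section SparseWorstRisk

variable {n d m : ℕ} {P σ0sq A B α β : ℝ}

theorem sum_le_sparseWorstRisk {θ : Fin d → ℝ} (hθ : θ ∈ sparseParams d m) :
    ∑ j, perCoordRisk n σ0sq A B α β (θ j) ≤ sparseWorstRisk n d m σ0sq A B α β :=
  le_csSup (bddAbove_image_sum_sparseParams continuous_perCoordRisk) ⟨θ, hθ, rfl⟩

theorem noise_add_max_le_sparseWorstRisk (hmd : m ≤ d) :
    d * (α ^ 2 * σ0sq + m / d * (1 - m / d)
        * max ((α * n * (B - A) - 1) ^ 2) ((α * n * (B - A)) ^ 2 / n))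
      ≤ sparseWorstRisk n d m σ0sq A B α β := by
  have hvertex : ∑ j, perCoordRisk n σ0sq A B α β (sparseVertex d m j)
      ≤ sparseWorstRisk n d m σ0sq A B α β :=
    sum_le_sparseWorstRisk (sparseVertex_mem_sparseParams hmd)
  have hcenter : ∑ _j : Fin d, perCoordRisk n σ0sq A B α β (m / d)
      ≤ sparseWorstRisk n d m σ0sq A B α β := sum_le_sparseWorstRisk (const_mem_sparseParams hmd)
  rw [sum_comp_sparseVertex hmd, ← natCast_mul_div_natCast hmd, ← mul_one_sub, mul_assoc,
    mul_assoc, ← mul_add] at hvertex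
  rw [sum_const, card_univ, Fintype.card_fin, nsmul_eq_mul] at hcenter
  refine le_trans ?_
    ((mul_max_of_nonneg _ _ (Nat.cast_nonneg d)).trans_le (max_le hvertex hcenter))
  rw [perCoordRisk_convexComb, perCoordRisk_eq,
    mul_max_of_nonneg _ _ (div_mul_one_sub_div_nonneg hmd), ← max_add_add_left, mul_div_assoc]
  exact mul_le_mul_of_nonneg_left (max_le_max (le_add_of_nonneg_right (sq_nonneg _))
    (le_add_of_nonneg_right (sq_nonneg _))) (Nat.cast_nonneg d)

theorem lowerBound_le_sparseWorstRisk (hn : 0 < n) (hd : 0 < d) (hmd : m ≤ d) (hP : 0 < P)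
    (hσ : 0 ≤ σ0sq) (hlow : √n * σ0sq ≤ n ^ 2 * P)
    (hpow : ∀ θ ∈ sparseParams d m, ∑ j, (θ j * B ^ 2 + (1 - θ j) * A ^ 2) ≤ d * P) :
    d * (m / d * (1 - m / d)) * (1 + σ0sq / (n * P)) / (√n + 1) ^ 2
      ≤ sparseWorstRisk n d m σ0sq A B α β := by
  set p : ℝ := m / d
  set u := α * n * (B - A)
  set ρ := σ0sq / (n ^ 2 * P)
  have hnR : (0 : ℝ) < n := Nat.cast_pos.2 hn
  have hspread : p * (1 - p) * (B - A) ^ 2 ≤ P := by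
    have hcenter := hpow _ (const_mem_sparseParams hmd)
    rw [sum_const, card_univ, Fintype.card_fin, nsmul_eq_mul] at hcenter
    exact (mul_one_sub_mul_sq_sub_le p A B).trans (le_of_mul_le_mul_left hcenter (by positivity))
  have hscalar : (1 + n * ρ) / (√n + 1) ^ 2 ≤ ρ * u ^ 2 + max ((u - 1) ^ 2) (u ^ 2 / n) := by
    have := le_mul_sq_add_max (Real.sqrt_pos.2 hnR) (by positivity) (ρ := ρ)
      (by rw [← mul_div_assoc, div_le_one (by positivity)]; exact hlow) u
    rwa [div_pow, Real.sq_sqrt hnR.le] at this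
  have hq : 0 ≤ p * (1 - p) := div_mul_one_sub_div_nonneg hmd
  calc _ = d * (p * (1 - p) * ((1 + n * ρ) / (√n + 1) ^ 2)) := by
        simp only [ρ]; field_simp
    _ ≤ d * (p * (1 - p) * (ρ * u ^ 2) + p * (1 - p) * max ((u - 1) ^ 2) (u ^ 2 / n)) := by
        rw [← mul_add]; gcongr
    _ ≤ d * (α ^ 2 * σ0sq + p * (1 - p) * max ((u - 1) ^ 2) (u ^ 2 / n)) := by
        gcongr (d : ℝ) * (?_ + _)
        exact mul_noise_le_of_spread_le hn hP hσ hspread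
    _ ≤ _ := noise_add_max_le_sparseWorstRisk hmd

theorem sparseWorstRisk_eq_of_slope_bias (hn : 0 < n) (hmd : 2 * m ≤ d)
    (hslope : α * n * (B - A) = √n / (√n + 1)) (hbias : α * n * A + β = m / d / (√n + 1)) :
    sparseWorstRisk n d m σ0sq A B α β
      = d * (α ^ 2 * σ0sq + (m / d) ^ 2 / (√n + 1) ^ 2) + (1 - 2 * (m / d)) / (√n + 1) ^ 2 * m := by
  have hslope_nonneg : 0 ≤ (1 - 2 * ((m : ℝ) / d)) / (√n + 1) ^ 2 := by
    refine div_nonneg (sub_nonneg.2 ?_) (by positivity)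
    rw [← mul_div_assoc]
    exact div_le_one_of_le₀ (by exact_mod_cast hmd) (Nat.cast_nonneg d)
  unfold sparseWorstRisk
  simp_rw [perCoordRisk_eq_of_slope_bias hn hslope hbias]
  exact (isGreatest_image_sum_affine (by omega) hslope_nonneg).csSup_eq

end SparseWorstRisk

theorem sqrt_div_mul_sqrt_div {a b : ℝ} (ha : 0 < a) (hb : 0 < b) : √(a / b) * √(b / a) = 1 := by
  rw [← Real.sqrt_mul (by positivity), div_mul_div_comm, mul_comm b, div_self (by positivity),
    Real.sqrt_one]

theorem mul_mul_sqrt_div_add_sqrt_div_sq {a b : ℝ} (ha : 0 < a) (hb : 0 < b) :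
    a * b * (√(a / b) + √(b / a)) ^ 2 = (a + b) ^ 2 := by
  rw [add_sq, Real.sq_sqrt (by positivity), Real.sq_sqrt (by positivity), mul_assoc 2,
    sqrt_div_mul_sqrt_div ha hb]
  field_simp
  ring

theorem sqrt_mul_le_sq_mul_of_low_noise {n d m : ℕ} {P σ0sq : ℝ} (hm : 0 < m) (hmd : 2 * m ≤ d)
    (hσ : 0 ≤ σ0sq)
    (hcase : ((d : ℝ) ^ 2 / (4 * (m : ℝ) * ((d : ℝ) - m))) * σ0sq ≤ (n : ℝ) ^ ((3 : ℝ) / 2) * P) :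
    √n * σ0sq ≤ n ^ 2 * P := by
  have hmR : (0 : ℝ) < m := Nat.cast_pos.2 hm
  have hdm : 2 * (m : ℝ) ≤ d := by exact_mod_cast hmd
  have hone : 1 ≤ (d : ℝ) ^ 2 / (4 * m * (d - m)) := by
    rw [one_le_div (by nlinarith)]
    nlinarith [sq_nonneg ((d : ℝ) - 2 * m)]
  have hpow : (n : ℝ) ^ ((3 : ℝ) / 2) = √n ^ 3 := by
    rw [Real.sqrt_eq_rpow, ← Real.rpow_natCast, ← Real.rpow_mul (Nat.cast_nonneg n)]
    norm_num
  have hσ' : σ0sq ≤ √n ^ 3 * P := by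
    rw [← hpow]; nlinarith
  calc √n * σ0sq ≤ √n * (√n ^ 3 * P) := by gcongr
    _ = (√n ^ 2) ^ 2 * P := by ring
    _ = n ^ 2 * P := by rw [Real.sq_sqrt (Nat.cast_nonneg n)]

theorem minimax_value_eq {n d m : ℕ} {P σ0sq s : ℝ} (hn : 0 < n) (hm : 0 < m) (hmd : 2 * m ≤ d)
    (hP : 0 < P) (hs : s = √(((d : ℝ) - m) / m) + √((m : ℝ) / ((d : ℝ) - m))) :
    ((m : ℝ) / (√n + 1) ^ 2) * (((d : ℝ) - m) / d + (d : ℝ) * σ0sq / ((m : ℝ) * n * P * s ^ 2))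
      = d * (m / d * (1 - m / d)) * (1 + σ0sq / (n * P)) / (√n + 1) ^ 2 := by
  have hnR : (0 : ℝ) < n := Nat.cast_pos.2 hn
  have hmR : (0 : ℝ) < m := Nat.cast_pos.2 hm
  have hdm : (0 : ℝ) < d - m := by
    have : 2 * (m : ℝ) ≤ d := by exact_mod_cast hmd
    linarith
  have hdR : (0 : ℝ) < d := by linarith
  have hs2 : s ^ 2 = d ^ 2 / ((d - m) * m) := by
    rw [eq_div_iff (by positivity), mul_comm, hs, mul_mul_sqrt_div_add_sqrt_div_sq hdm hmR,
      sub_add_cancel]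
  rw [hs2]
  field_simp

theorem optimal_power_le {d m : ℕ} {P : ℝ} (hm : 0 < m) (hmd : 2 * m ≤ d) (hP : 0 < P) :
    ∀ θ ∈ sparseParams d m, ∑ j, (θ j * √((d - m) * P / m) ^ 2
      + (1 - θ j) * (-√(m * P / (d - m))) ^ 2) ≤ d * P := by
  intro θ hθ
  have hmR : (0 : ℝ) < m := Nat.cast_pos.2 hm
  have hdm : (m : ℝ) ≤ d - m := by
    rw [le_sub_iff_add_le, ← two_mul]; exact_mod_cast hmd
  have hdmR : (0 : ℝ) < d - m := hmR.trans_le hdm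
  rw [neg_sq, Real.sq_sqrt (by positivity), Real.sq_sqrt (by positivity)]
  have hgap : 0 ≤ (d - m) * P / m - m * P / (d - m) := by
    rw [sub_nonneg, div_le_div_iff₀ hdmR hmR]
    nlinarith [mul_le_mul hdm hdm hmR.le hdmR.le]
  calc _ = ∑ j, (m * P / (d - m) + ((d - m) * P / m - m * P / (d - m)) * θ j) := by
        congr 1; ext j; ring
    _ ≤ d * (m * P / (d - m)) + ((d - m) * P / m - m * P / (d - m)) * m :=
        (isGreatest_image_sum_affine (by omega) hgap).2 ⟨θ, hθ, rfl⟩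
    _ = d * P := by field_simp; ring

theorem optimal_slope_bias {n : ℕ} {P x y p α β : ℝ} (hn : 0 < n) (hP : 0 < P) (hxy : 0 < x + y)
    (hα : α = 1 / (√(n * P) * (x + y) * (√n + 1)))
    (hβ : β = (1 - 2 * p) * (n * √P / 2) * (x + y) * α + p - (n * √P / 2) * (x - y) * α) :
    α * n * (√P * x - -(√P * y)) = √n / (√n + 1) ∧ α * n * -(√P * y) + β = p / (√n + 1) := by
  have hnR : (0 : ℝ) < n := Nat.cast_pos.2 hn
  have hn0 : 0 < √(n : ℝ) := Real.sqrt_pos.2 hnR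
  have hP0 : 0 < √P := Real.sqrt_pos.2 hP
  have hslope : α * n * (√P * x - -(√P * y)) = √n / (√n + 1) := by
    rw [hα, Real.sqrt_mul hnR.le]
    field_simp
    rw [Real.sq_sqrt hnR.le]
    ring
  refine ⟨hslope, ?_⟩
  have hbias : α * n * -(√P * y) + β = p * (1 - α * n * (√P * x - -(√P * y))) := by
    rw [hβ]; ring
  rw [hbias, hslope]
  field_simp
  ring

theorem sparseWorstRisk_optimal {n d m : ℕ} {P σ0sq s Astar Bstar αstar βstar : ℝ} (hn : 0 < n)
    (hm : 0 < m) (hmd : 2 * m ≤ d) (hP : 0 < P)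
    (hs : s = √(((d : ℝ) - m) / m) + √((m : ℝ) / ((d : ℝ) - m)))
    (hA : Astar = -√((m : ℝ) * P / ((d : ℝ) - m)))
    (hB : Bstar = √(((d : ℝ) - m) * P / m))
    (hα : αstar = 1 / (√((n : ℝ) * P) * s * (√n + 1)))
    (hβ : βstar = (1 - 2 * (m : ℝ) / d) * ((n : ℝ) * √P / 2) * s * αstar
        + (m : ℝ) / d - ((n : ℝ) * √P / 2) *
            (√(((d : ℝ) - m) / m) - √((m : ℝ) / ((d : ℝ) - m))) * αstar) :
    sparseWorstRisk n d m σ0sq Astar Bstar αstar βstar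
      = ((m : ℝ) / (√n + 1) ^ 2)
          * (((d : ℝ) - m) / d + (d : ℝ) * σ0sq / ((m : ℝ) * n * P * s ^ 2)) := by
  have hnR : (0 : ℝ) < n := Nat.cast_pos.2 hn
  have hmR : (0 : ℝ) < m := Nat.cast_pos.2 hm
  have hdm : (0 : ℝ) < d - m := by
    have : 2 * (m : ℝ) ≤ d := by exact_mod_cast hmd
    linarith
  have hdR : (0 : ℝ) < d := by linarith
  have hA' : Astar = -(√P * √(m / (d - m))) := by
    rw [hA, ← Real.sqrt_mul hP.le, mul_div_assoc', mul_comm P]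
  have hB' : Bstar = √P * √((d - m) / m) := by
    rw [hB, ← Real.sqrt_mul hP.le, mul_div_assoc', mul_comm P]
  have hs0 : 0 < s :=
    hs ▸ add_pos (Real.sqrt_pos.2 (by positivity)) (Real.sqrt_pos.2 (by positivity))
  obtain ⟨hslope, hbias⟩ := optimal_slope_bias (p := m / d) (β := βstar) hn hP (hs ▸ hs0)
    (hs ▸ hα) (by rw [hβ, hs, mul_div_assoc])
  rw [hA', hB', sparseWorstRisk_eq_of_slope_bias hn hmd hslope hbias, hα,
    Real.sqrt_mul hnR.le]
  field_simp
  rw [Real.sq_sqrt hnR.le, Real.sq_sqrt hP.le]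
  ring

/-- low-channel-noise case of Theorem 1. Minimax error for the `m`-sparse
Bernoulli model with two-valued encodings under the average power constraint and affine
estimators, when `(d²/(4m(d−m)))σ₀² ≤ n^{3/2}P`. -/
theorem sparse_bernoulli_minimax_risk_low_noise
    (n d m : ℕ) (hn : 1 ≤ n) (hm : 1 ≤ m) (hmd : 2 * m ≤ d)
    (P σ0sq : ℝ) (hP : 0 < P) (hσ0 : 0 < σ0sq)
    (hcase : ((d : ℝ) ^ 2 / (4 * (m : ℝ) * ((d : ℝ) - m))) * σ0sq ≤ (n : ℝ) ^ ((3 : ℝ) / 2) * P)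
    (s Astar Bstar αstar βstar : ℝ)
    (hs : s = Real.sqrt (((d : ℝ) - m) / m) + Real.sqrt ((m : ℝ) / ((d : ℝ) - m)))
    (hA : Astar = -Real.sqrt ((m : ℝ) * P / ((d : ℝ) - m)))
    (hB : Bstar = Real.sqrt (((d : ℝ) - m) * P / m))
    (hα : αstar = 1 / (Real.sqrt ((n : ℝ) * P) * s * (Real.sqrt n + 1)))
    (hβ : βstar = (1 - 2 * (m : ℝ) / d) * ((n : ℝ) * Real.sqrt P / 2) * s * αstar
        + (m : ℝ) / d - ((n : ℝ) * Real.sqrt P / 2) *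
            (Real.sqrt (((d : ℝ) - m) / m) - Real.sqrt ((m : ℝ) / ((d : ℝ) - m))) * αstar) :
    sInf {x : ℝ | ∃ A B α β : ℝ,
          (∀ θ ∈ sparseParams d m, ∑ j, (θ j * B ^ 2 + (1 - θ j) * A ^ 2) ≤ (d : ℝ) * P) ∧
          x = sparseWorstRisk n d m σ0sq A B α β}
        = ((m : ℝ) / (Real.sqrt n + 1) ^ 2) *
            (((d : ℝ) - m) / d + (d : ℝ) * σ0sq / ((m : ℝ) * n * P * s ^ 2))
    ∧ (∀ θ ∈ sparseParams d m,
          ∑ j, (θ j * Bstar ^ 2 + (1 - θ j) * Astar ^ 2) ≤ (d : ℝ) * P)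
    ∧ sparseWorstRisk n d m σ0sq Astar Bstar αstar βstar
        = ((m : ℝ) / (Real.sqrt n + 1) ^ 2) *
            (((d : ℝ) - m) / d + (d : ℝ) * σ0sq / ((m : ℝ) * n * P * s ^ 2)) := by
  have hpow_opt : ∀ θ ∈ sparseParams d m,
      ∑ j, (θ j * Bstar ^ 2 + (1 - θ j) * Astar ^ 2) ≤ (d : ℝ) * P := by
    rw [hA, hB]; exact optimal_power_le hm hmd hP
  have hrisk_opt := sparseWorstRisk_optimal (σ0sq := σ0sq) hn hm hmd hP hs hA hB hα hβ
  refine ⟨IsLeast.csInf_eq ⟨⟨Astar, Bstar, αstar, βstar, hpow_opt, hrisk_opt.symm⟩, ?_⟩,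
    hpow_opt, hrisk_opt⟩
  rintro _ ⟨A, B, α, β, hpow, rfl⟩
  rw [minimax_value_eq hn hm hmd hP hs]
  exact lowerBound_le_sparseWorstRisk hn (by omega) (by omega) hP hσ0.le
    (sqrt_mul_le_sq_mul_of_low_noise hm hmd hσ0.le hcase) hpow
end

section
/- Let n, d, m be positive integers with 1 ≤ m ≤ d, let C > 0 and σ₀² > 0. For α, β ∈ ℝ and θ ∈ [0,1]^d define R_{C,α,β}(θ) = [4(n²−n)C²α² − 4nCα + 1]·Σ_j θ_j² + [4nC²α² + 4nCαβ − 2β − 4n²C²α² + 2nCα]·Σ_j θ_j + d·[α²σ₀² + (β − nCα)²], and let Θ_m = { θ ∈ [0,1]^d : Σ_j θ_j ≤ m }. Define α* = min{ 1/(2√n·C·(√n+1)), nC/(2(σ₀² + n²C²)) } and β* = 1/2 if 2m ≥ d, and α* = min{ 1/(2√n·C·(√n+1)), 2m(d−m)nC/(d²σ₀² + 4m(d−m)n²C²) } and β* = (1 − 2m/d)·nC·α* + m/d if 2m ≤ d. Then (α*, β*) satisfies 4(n²−n)C²α*² − 4nCα* + 1 ≥ 0, and for every (α, β) ∈ ℝ²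 with 4(n²−n)C²α² − 4nCα + 1 ≥ 0 one has sup_{θ ∈ Θ_m} R_{C,α,β}(θ) ≥ sup_{θ ∈ Θ_m} R_{C,α*,β*}(θ). -/
open Real

/-- The exact risk expression `R_{C,α,β}(θ)` for the `m`-sparse Bernoulli model when each
user transmits `C(2u−1)` per coordinate over a Gaussian MAC with noise variance `σ0sq` and
the processor uses the affine estimator `αY + β`. -/
noncomputable def Rrisk (n d : ℕ) (σ0sq C α β : ℝ) (θ : Fin d → ℝ) : ℝ :=
  (4 * ((n : ℝ) ^ 2 - n) * C ^ 2 * α ^ 2 - 4 * n * C * α + 1) * ∑ j, θ j ^ 2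
    + (4 * n * C ^ 2 * α ^ 2 + 4 * n * C * α * β - 2 * β - 4 * (n : ℝ) ^ 2 * C ^ 2 * α ^ 2
        + 2 * n * C * α) * ∑ j, θ j
    + (d : ℝ) * (α ^ 2 * σ0sq + (β - n * C * α) ^ 2)

/-- Worst-case (over `θ ∈ Θ_m`) risk. -/
noncomputable def worstRrisk (n d m : ℕ) (σ0sq C α β : ℝ) : ℝ :=
  sSup (Rrisk n d σ0sq C α β '' sparseParams d m)

/-!
With `A = 4(n² - n)C²α² - 4nCα + 1` and `t = 1 - 2nCα`, the risk equals
`A·∑θⱼ² + (t(1 - 2β) - A)·∑θⱼ + d(α²σ₀² + (β - nCα)²)`. On `Θ_m` we have `∑θⱼ² ≤ ∑θⱼ ≤ m`, so for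
`A ≥ 0` the supremum is attained at `θ = 0` or at the indicator of `m` coordinates and equals
`d(α²σ₀² + (β - nCα)²) + m·max(0, t(1 - 2β))`. Bounding `m·max(0, x)` below by `k x` with
`k = min(m, d/2)` and completing the square in `β` leaves `dσ₀²α² + k(d - k)/d·t²`, with equality
at `β*`. This convex quadratic in `α` is then minimised over `{A ≥ 0}`: the roots of `A` are
`1/(2√n(√n ± 1)C)`, and the larger one lies beyond the reflection of the smaller one in the
unconstrained minimiser, so the constrained minimum is at `α*`.
-/

open Finset

noncomputable section

def sqCoeff (n : ℕ) (C α : ℝ) : ℝ :=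
  4 * ((n : ℝ) ^ 2 - n) * C ^ 2 * α ^ 2 - 4 * n * C * α + 1

/-- The smaller root of `sqCoeff n C`. -/
def sqCoeffRoot (n : ℕ) (C : ℝ) : ℝ :=
  1 / (2 * √n * C * (√n + 1))

def worstRriskFormula (n d m : ℕ) (σ0sq C α β : ℝ) : ℝ :=
  d * (α ^ 2 * σ0sq + (β - n * C * α) ^ 2) + m * max 0 ((1 - 2 * n * C * α) * (1 - 2 * β))

end

section WorstCase

variable {n d m : ℕ} {σ0sq C α β : ℝ}

theorem Rrisk_eq (θ : Fin d → ℝ) :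
    Rrisk n d σ0sq C α β θ = sqCoeff n C α * ∑ j, θ j ^ 2
      + ((1 - 2 * n * C * α) * (1 - 2 * β) - sqCoeff n C α) * ∑ j, θ j
      + d * (α ^ 2 * σ0sq + (β - n * C * α) ^ 2) := by
  unfold Rrisk sqCoeff
  ring

theorem zero_mem_sparseParams (d m : ℕ) : (0 : Fin d → ℝ) ∈ sparseParams d m :=
  ⟨fun _ => ⟨le_rfl, zero_le_one⟩, by simp⟩

theorem sum_nonneg_of_mem_sparseParams {θ : Fin d → ℝ} (hθ : θ ∈ sparseParams d m) :
    0 ≤ ∑ j, θ j :=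
  sum_nonneg fun j _ => (hθ.1 j).1

theorem sum_sq_le_sum_of_mem_sparseParams {θ : Fin d → ℝ} (hθ : θ ∈ sparseParams d m) :
    ∑ j, θ j ^ 2 ≤ ∑ j, θ j :=
  sum_le_sum fun j _ => by nlinarith [(hθ.1 j).1, (hθ.1 j).2]

theorem Rrisk_le_worstRriskFormula (hA : 0 ≤ sqCoeff n C α) {θ : Fin d → ℝ}
    (hθ : θ ∈ sparseParams d m) :
    Rrisk n d σ0sq C α β θ ≤ worstRriskFormula n d m σ0sq C α β := by
  set T := (1 - 2 * n * C * α) * (1 - 2 * β)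
  have hS := sum_nonneg_of_mem_sparseParams hθ
  have hTS : T * ∑ j, θ j ≤ m * max 0 T :=
    calc T * ∑ j, θ j ≤ max 0 T * ∑ j, θ j := by gcongr; exact le_max_right 0 T
      _ ≤ max 0 T * m := by gcongr; exact hθ.2
      _ = m * max 0 T := mul_comm _ _
  rw [Rrisk_eq, worstRriskFormula]
  nlinarith [mul_le_mul_of_nonneg_left (sum_sq_le_sum_of_mem_sparseParams hθ) hA]

theorem exists_mem_sparseParams_Rrisk_eq (hmd : m ≤ d) :
    ∃ θ ∈ sparseParams d m, Rrisk n d σ0sq C α β θ = worstRriskFormula n d m σ0sq C α β := by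
  rcases le_total ((1 - 2 * n * C * α) * (1 - 2 * β)) 0 with h | h
  · refine ⟨0, zero_mem_sparseParams d m, ?_⟩
    simp [Rrisk_eq, worstRriskFormula, max_eq_left h]
  · set θ : Fin d → ℝ := fun j => if (j : ℕ) < m then 1 else 0
    have hsum : ∑ j, θ j = m := by
      simp only [θ, sum_boole, Fin.card_filter_val_lt, min_eq_right hmd]
    have hsq : ∑ j, θ j ^ 2 = m := by
      rw [← hsum]
      refine sum_congr rfl fun j _ => ?_
      by_cases hj : (j : ℕ) < m <;> simp [θ, hj]
    refine ⟨θ, ⟨fun j => ?_, hsum.le⟩, ?_⟩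
    · by_cases hj : (j : ℕ) < m <;> simp [θ, hj]
    · rw [Rrisk_eq, hsum, hsq, worstRriskFormula, max_eq_right h]
      ring

theorem worstRrisk_eq_worstRriskFormula (hmd : m ≤ d) (hA : 0 ≤ sqCoeff n C α) :
    worstRrisk n d m σ0sq C α β = worstRriskFormula n d m σ0sq C α β := by
  obtain ⟨θ, hθ, hθeq⟩ := exists_mem_sparseParams_Rrisk_eq (σ0sq := σ0sq) (β := β) hmd
  refine IsGreatest.csSup_eq ⟨⟨θ, hθ, hθeq⟩, ?_⟩
  rintro _ ⟨θ', hθ', rfl⟩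
  exact Rrisk_le_worstRriskFormula hA hθ'

end WorstCase

section Minimisation

variable {n d m : ℕ} {σ0sq C α β k : ℝ}

/-- `m · max 0 x ≥ k x` for `0 ≤ k ≤ m`; the rest is completing the square in `β`. -/
theorem profile_le_worstRriskFormula (hd : 0 < (d : ℝ)) (hk0 : 0 ≤ k) (hkm : k ≤ m) :
    d * σ0sq * α ^ 2 + k * (d - k) / d * (1 - 2 * (n * C) * α) ^ 2
      ≤ worstRriskFormula n d m σ0sq C α β := by
  set t := 1 - 2 * (n * C) * α
  set T := (1 - 2 * n * C * α) * (1 - 2 * β)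
  have hkT : k * T ≤ m * max 0 T :=
    (mul_le_mul_of_nonneg_left (le_max_right 0 T) hk0).trans
      (mul_le_mul_of_nonneg_right hkm (le_max_left 0 T))
  have hsquare : d * (α ^ 2 * σ0sq + (β - n * C * α) ^ 2) + k * T
      = d * σ0sq * α ^ 2 + k * (d - k) / d * t ^ 2 + (d * (β - n * C * α) - k * t) ^ 2 / d := by
    field_simp
    ring
  have hgap : 0 ≤ (d * (β - n * C * α) - k * t) ^ 2 / d := by positivity
  rw [worstRriskFormula]
  linarith

theorem worstRriskFormula_at_opt (hd : 0 < (d : ℝ)) (h2k : 2 * k ≤ d)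
    (hcrit : ((m : ℝ) - k) * (d - 2 * k) = 0) :
    worstRriskFormula n d m σ0sq C α ((1 - 2 * k / d) * n * C * α + k / d)
      = d * σ0sq * α ^ 2 + k * (d - k) / d * (1 - 2 * (n * C) * α) ^ 2 := by
  have hT : (1 - 2 * n * C * α) * (1 - 2 * ((1 - 2 * k / d) * n * C * α + k / d))
      = (1 - 2 * k / d) * (1 - 2 * n * C * α) ^ 2 := by ring
  have hT0 : 0 ≤ (1 - 2 * k / d) * (1 - 2 * n * C * α) ^ 2 :=
    mul_nonneg (sub_nonneg.2 ((div_le_one hd).2 h2k)) (sq_nonneg _)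
  rw [worstRriskFormula, hT, max_eq_right hT0]
  field_simp
  linear_combination (1 - 2 * n * C * α) ^ 2 * hcrit

theorem sq_sub_min_le {a q x : ℝ} (h : x ≤ a ∨ 2 * q ≤ x + a) :
    (min a q - q) ^ 2 ≤ (x - q) ^ 2 := by
  rcases le_total q a with hqa | haq
  · simpa [min_eq_right hqa] using sq_nonneg (x - q)
  · rw [min_eq_left haq]
    rcases h with h | h
    · nlinarith
    · nlinarith [mul_nonneg (sub_nonneg.2 h) (by linarith : (0 : ℝ) ≤ x - a)]

/-- `q` is the unconstrained minimiser, and `2cq ≤ 1` puts every `x` of the second kind beyond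
the reflection of `a` in `q`. -/
theorem quadratic_min_le {v K c q a x : ℝ} (hv : 0 < v) (hK : 0 ≤ K) (hc : 0 < c)
    (hq : (v + 4 * c ^ 2 * K) * q = 2 * c * K) (h : x ≤ a ∨ 1 ≤ c * (x + a)) :
    v * min a q ^ 2 + K * (1 - 2 * c * min a q) ^ 2 ≤ v * x ^ 2 + K * (1 - 2 * c * x) ^ 2 := by
  have hM : 0 < v + 4 * c ^ 2 * K := by positivity
  have hvertex : ∀ y, v * y ^ 2 + K * (1 - 2 * c * y) ^ 2
      = (v + 4 * c ^ 2 * K) * (y - q) ^ 2 + (K - (v + 4 * c ^ 2 * K) * q ^ 2) := fun y => by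
    linear_combination 2 * y * hq
  have h2cq : c * (2 * q) ≤ 1 := by
    refine le_of_mul_le_mul_left ?_ hM
    linear_combination 2 * c * hq + hv
  rw [hvertex, hvertex]
  gcongr (v + 4 * c ^ 2 * K) * ?_ + _
  exact sq_sub_min_le (h.imp_right fun h => le_of_mul_le_mul_left (h2cq.trans h) hc)

end Minimisation

section Admissible

variable {n : ℕ} {C α : ℝ}

theorem sqCoeff_eq_mul :
    sqCoeff n C α = (1 - 2 * √n * (√n + 1) * C * α) * (1 - 2 * √n * (√n - 1) * C * α) := by
  have hs : √(n : ℝ) ^ 2 = n := Real.sq_sqrt n.cast_nonneg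
  unfold sqCoeff
  linear_combination (4 * C * α - 4 * C ^ 2 * α ^ 2 * (n + √n ^ 2 - 1)) * hs

theorem mul_sqCoeffRoot (hn : 1 ≤ n) (hC : 0 < C) :
    2 * √n * (√n + 1) * C * sqCoeffRoot n C = 1 := by
  have : 0 < √(n : ℝ) := Real.sqrt_pos.2 (by exact_mod_cast hn)
  unfold sqCoeffRoot
  field_simp

theorem sqCoeffRoot_pos (hn : 1 ≤ n) (hC : 0 < C) : 0 < sqCoeffRoot n C := by
  have : 0 < √(n : ℝ) := Real.sqrt_pos.2 (by exact_mod_cast hn)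
  unfold sqCoeffRoot
  positivity

theorem sqCoeff_nonneg_of_le_root (hn : 1 ≤ n) (hC : 0 < C) (h : α ≤ sqCoeffRoot n C) :
    0 ≤ sqCoeff n C α := by
  rcases le_or_gt 0 α with hα | hα
  · have hs : 0 ≤ √(n : ℝ) := Real.sqrt_nonneg _
    have h1 : 2 * √n * (√n + 1) * C * α ≤ 1 :=
      calc 2 * √n * (√n + 1) * C * α ≤ 2 * √n * (√n + 1) * C * sqCoeffRoot n C := by gcongr
        _ = 1 := mul_sqCoeffRoot hn hC
    have h2 : 2 * √n * (√n - 1) * C * α ≤ 2 * √n * (√n + 1) * C * α := by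
      gcongr
      linarith
    rw [sqCoeff_eq_mul]
    exact mul_nonneg (by linarith) (by linarith)
  · have hn' : (n : ℝ) ≤ (n : ℝ) ^ 2 := by
      nlinarith [(Nat.one_le_cast (α := ℝ)).2 hn]
    unfold sqCoeff
    nlinarith [mul_nonneg (mul_nonneg (sub_nonneg.2 hn') (sq_nonneg C)) (sq_nonneg α),
      mul_pos (mul_pos (Nat.cast_pos.2 hn) hC) (neg_pos.2 hα)]

/-- Beyond the smaller root, `sqCoeff n C α ≥ 0` forces `α` past the larger root
`1 / (2√n(√n - 1)C)`, and the two roots add up to at least `1 / (nC)`. -/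
theorem le_root_or_one_le_of_sqCoeff_nonneg (hn : 1 ≤ n) (hC : 0 < C) (hA : 0 ≤ sqCoeff n C α) :
    α ≤ sqCoeffRoot n C ∨ 1 ≤ n * C * (α + sqCoeffRoot n C) := by
  refine or_iff_not_imp_left.2 fun hlt => ?_
  have hroot := mul_sqCoeffRoot hn hC
  set s := √(n : ℝ)
  have hs : 1 ≤ s := Real.one_le_sqrt.2 (by exact_mod_cast hn)
  have hs2 : s ^ 2 = n := Real.sq_sqrt n.cast_nonneg
  have hα : 0 < s * C * α := by
    have := (sqCoeffRoot_pos hn hC).trans (not_le.1 hlt)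
    positivity
  have h1 : 1 < 2 * s * (s + 1) * C * α :=
    calc 1 = 2 * s * (s + 1) * C * sqCoeffRoot n C := hroot.symm
      _ < 2 * s * (s + 1) * C * α := by gcongr; exact not_le.1 hlt
  have h2 : 1 ≤ 2 * s * (s - 1) * C * α := by
    rw [sqCoeff_eq_mul] at hA
    linarith [nonpos_of_mul_nonneg_right hA (by linarith)]
  rw [← hs2]
  nlinarith [mul_nonneg (by linarith : (0 : ℝ) ≤ s - 1) hα.le]

end Admissible

/-- Together, `hkm`, `h2k` and `hcrit` say `k = min m (d / 2)`. -/
theorem worstRrisk_optimal {n d m : ℕ} (hn : 1 ≤ n) (hmd : m ≤ d) (hd : 0 < (d : ℝ))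
    {C σ0sq k αs βs : ℝ} (hC : 0 < C) (hσ0 : 0 < σ0sq) (hk0 : 0 ≤ k) (hkm : k ≤ m)
    (h2k : 2 * k ≤ d) (hcrit : ((m : ℝ) - k) * (d - 2 * k) = 0)
    (hαs : αs = min (sqCoeffRoot n C) (2 * (n * C) * (k * (d - k) / d) /
      (d * σ0sq + 4 * (n * C) ^ 2 * (k * (d - k) / d))))
    (hβs : βs = (1 - 2 * k / d) * n * C * αs + k / d) :
    0 ≤ sqCoeff n C αs ∧ ∀ α β : ℝ, 0 ≤ sqCoeff n C α →
      worstRrisk n d m σ0sq C αs βs ≤ worstRrisk n d m σ0sq C α β := by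
  have hαs_adm : 0 ≤ sqCoeff n C αs :=
    sqCoeff_nonneg_of_le_root hn hC (hαs ▸ min_le_left _ _)
  refine ⟨hαs_adm, fun α β hα => ?_⟩
  have hK : 0 ≤ k * (d - k) / d := div_nonneg (mul_nonneg hk0 (by linarith)) hd.le
  rw [worstRrisk_eq_worstRriskFormula hmd hαs_adm, worstRrisk_eq_worstRriskFormula hmd hα, hβs,
    worstRriskFormula_at_opt hd h2k hcrit]
  calc _ ≤ d * σ0sq * α ^ 2 + k * (d - k) / d * (1 - 2 * (n * C) * α) ^ 2 := by
        rw [hαs]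
        refine quadratic_min_le (by positivity) hK (by positivity) ?_
          (le_root_or_one_le_of_sqCoeff_nonneg hn hC hα)
        exact mul_div_cancel₀ _ (by positivity)
    _ ≤ _ := profile_le_worstRriskFormula hd hk0 hkm

/-- Lemma 4 / prooflemma1. Optimality of `(α*, β*)` among affine
estimators with `4(n²−n)C²α² − 4nCα + 1 ≥ 0`. -/
theorem sparse_bernoulli_opt_nonneg_case
    (n d m : ℕ) (hn : 1 ≤ n) (hm : 1 ≤ m) (hmd : m ≤ d)
    (C σ0sq : ℝ) (hC : 0 < C) (hσ0 : 0 < σ0sq) :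
    (2 * m ≥ d → ∀ αs βs : ℝ,
      αs = min (1 / (2 * Real.sqrt n * C * (Real.sqrt n + 1)))
               ((n : ℝ) * C / (2 * (σ0sq + (n : ℝ) ^ 2 * C ^ 2))) →
      βs = 1 / 2 →
      (4 * ((n : ℝ) ^ 2 - n) * C ^ 2 * αs ^ 2 - 4 * n * C * αs + 1 ≥ 0
        ∧ ∀ α β : ℝ, 4 * ((n : ℝ) ^ 2 - n) * C ^ 2 * α ^ 2 - 4 * n * C * α + 1 ≥ 0 →
            worstRrisk n d m σ0sq C α β ≥ worstRrisk n d m σ0sq C αs βs))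
    ∧ (2 * m ≤ d → ∀ αs βs : ℝ,
      αs = min (1 / (2 * Real.sqrt n * C * (Real.sqrt n + 1)))
               (2 * (m : ℝ) * ((d : ℝ) - m) * n * C /
                 ((d : ℝ) ^ 2 * σ0sq + 4 * (m : ℝ) * ((d : ℝ) - m) * (n : ℝ) ^ 2 * C ^ 2)) →
      βs = (1 - 2 * (m : ℝ) / d) * n * C * αs + (m : ℝ) / d →
      (4 * ((n : ℝ) ^ 2 - n) * C ^ 2 * αs ^ 2 - 4 * n * C * αs + 1 ≥ 0
        ∧ ∀ α β : ℝ, 4 * ((n : ℝ) ^ 2 - n) * C ^ 2 * α ^ 2 - 4 * n * C * α + 1 ≥ 0 →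
            worstRrisk n d m σ0sq C α β ≥ worstRrisk n d m σ0sq C αs βs)) := by
  have hd : (0 : ℝ) < d := by exact_mod_cast hm.trans hmd
  refine ⟨fun h2m αs βs hαs hβs => ?_, fun h2m αs βs hαs hβs => ?_⟩
  · have h2m' : (d : ℝ) ≤ 2 * m := by exact_mod_cast h2m
    refine worstRrisk_optimal hn hmd hd hC hσ0 (k := d / 2) (by positivity) (by linarith)
      (by linarith) (by ring) (hαs.trans ?_) (hβs.trans ?_)
    · congr 1
      field_simp
      ring
    · field_simp
      ring
  · have h2m' : 2 * (m : ℝ) ≤ d := by exact_mod_cast h2m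
    refine worstRrisk_optimal hn hmd hd hC hσ0 (k := m) (by positivity) le_rfl h2m'
      (by ring) (hαs.trans ?_) hβs
    congr 1
    field_simp
end

section
/- Let ε > 0, P > 0, σ₀² > 0 and let n ≥ 1 and s ≥ 1 be integers. Define σ_pri² = max{ (sP − 2εσ₀²)/(2εn + s), 0 }. Then 0 ≤ σ_pri² < P and (s/2) · ln( 1 + (P − σ_pri²)/(n·σ_pri² + σ₀²) ) ≤ ε. -/
open Real

/-!
The log is bounded by its linearisation, `log (1 + x) ≤ x`, so it suffices that
`s (P - σ_pri²) ≤ 2ε (n σ_pri² + σ₀²)`. Clearing the denominator `2εn + s`, this reads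
`sP - 2εσ₀² ≤ (2εn + s) · σ_pri²`, and the right-hand side is `max (sP - 2εσ₀², 0)`.
-/

/-- The privacy-noise variance `σ_pri²` of the scheme, with `n` and `s` read as reals. -/
noncomputable def privacyNoiseVariance (ε P σ0sq n s : ℝ) : ℝ :=
  max ((s * P - 2 * ε * σ0sq) / (2 * ε * n + s)) 0

lemma le_mul_max_div_zero {a b : ℝ} (hb : 0 < b) : a ≤ b * max (a / b) 0 := by
  rw [mul_max_of_nonneg _ _ hb.le, mul_div_cancel₀ _ hb.ne', mul_zero]
  exact le_max_left _ _

lemma log_one_add_le_self {x : ℝ} (hx : 0 ≤ x) : log (1 + x) ≤ x := by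
  simpa using log_le_sub_one_of_pos (by linarith : 0 < 1 + x)

section privacyNoiseVariance

variable {ε P σ0sq n s : ℝ}

lemma privacyNoiseVariance_nonneg : 0 ≤ privacyNoiseVariance ε P σ0sq n s :=
  le_max_right _ _

lemma privacyNoiseVariance_lt (hε : 0 < ε) (hP : 0 < P) (hσ0 : 0 < σ0sq) (hn : 0 ≤ n)
    (hs : 0 < s) : privacyNoiseVariance ε P σ0sq n s < P := by
  have hden : 0 < 2 * ε * n + s := by positivity
  refine max_lt ((div_lt_iff₀ hden).2 ?_) hP
  nlinarith [mul_pos hε hσ0, mul_nonneg (mul_pos hε hP).le hn]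

lemma mul_sub_privacyNoiseVariance_le (hε : 0 ≤ ε) (hn : 0 ≤ n) (hs : 0 < s) :
    s * (P - privacyNoiseVariance ε P σ0sq n s)
      ≤ 2 * ε * (n * privacyNoiseVariance ε P σ0sq n s + σ0sq) := by
  have := le_mul_max_div_zero (a := s * P - 2 * ε * σ0sq) (b := 2 * ε * n + s) (by positivity)
  unfold privacyNoiseVariance
  linarith

end privacyNoiseVariance

theorem robust_scheme_privacy_guarantee_general
    (ε P σ0sq : ℝ) (hε : 0 < ε) (hP : 0 < P) (hσ0 : 0 < σ0sq)
    (n s : ℕ) (hs : 1 ≤ s)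
    (σpri2 : ℝ)
    (hσpri : σpri2 = max (((s : ℝ) * P - 2 * ε * σ0sq) / (2 * ε * n + s)) 0) :
    (0 ≤ σpri2 ∧ σpri2 < P)
    ∧ ((s : ℝ) / 2) * Real.log (1 + (P - σpri2) / ((n : ℝ) * σpri2 + σ0sq)) ≤ ε := by
  obtain rfl : σpri2 = privacyNoiseVariance ε P σ0sq n s := hσpri
  have hs' : (0 : ℝ) < s := by exact_mod_cast hs
  have hσ := privacyNoiseVariance_nonneg (ε := ε) (P := P) (σ0sq := σ0sq) (n := n) (s := s)
  have hlt := privacyNoiseVariance_lt hε hP hσ0 n.cast_nonneg hs'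
  have hden : 0 < (n : ℝ) * privacyNoiseVariance ε P σ0sq n s + σ0sq := by positivity
  refine ⟨⟨hσ, hlt⟩, ?_⟩
  calc (s : ℝ) / 2 * log (1 + (P - _) / _)
      ≤ (s : ℝ) / 2 * ((P - _) / _) := by
        gcongr
        exact log_one_add_le_self (div_nonneg (sub_nonneg.2 hlt.le) hden.le)
    _ ≤ ε := by
        rw [div_mul_div_comm, div_le_iff₀ (by positivity)]
        linarith [mul_sub_privacyNoiseVariance_le (P := P) (σ0sq := σ0sq) hε.le n.cast_nonneg hs']

/-- privacy guarantee of Theorem 2. With privacy-noise variance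
`σ_pri² = max((sP − 2εσ₀²)/(2εn + s), 0)`, one has `0 ≤ σ_pri² < P` and
`(s/2)·ln(1 + (P − σ_pri²)/(nσ_pri² + σ₀²)) ≤ ε`. -/
theorem robust_scheme_privacy_guarantee
    (ε P σ0sq : ℝ) (hε : 0 < ε) (hP : 0 < P) (hσ0 : 0 < σ0sq)
    (n s : ℕ) (hn : 1 ≤ n) (hs : 1 ≤ s)
    (σpri2 : ℝ)
    (hσpri : σpri2 = max (((s : ℝ) * P - 2 * ε * σ0sq) / (2 * ε * n + s)) 0) :
    (0 ≤ σpri2 ∧ σpri2 < P)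
    ∧ ((s : ℝ) / 2) * Real.log (1 + (P - σpri2) / ((n : ℝ) * σpri2 + σ0sq)) ≤ ε :=
  robust_scheme_privacy_guarantee_general ε P σ0sq hε hP hσ0 n s hs σpri2 hσpri
end

section
/- Let σ > 0, B > 0, P > 0, σ₀ > 0, ε > 0, and integers n ≥ 1, d ≥ 1 with dP ≥ 2εσ₀². Set σ_pri² = (dP − 2εσ₀²)/(2εn + d) and a = √( (P − σ_pri²)/(B² + σ²) ). Let θ ∈ ℝ^d, let U_{ij} (1 ≤ i ≤ n, 1 ≤ j ≤ d) be independent with U_{ij} ~ N(θ_j, σ²), and let W_1, …, W_d be independent N(0, σ₀² + n·σ_pri²) variables independent of the U_{ij}. Set Y_j = a·Σ_{i=1}^n U_{ij} + W_j and θ̂_j = Y_j/(n·a). Then E[ Σ_{j=1}^d (θ̂_j − θ_j)² ] = (d σ²/n) · ( 1 + (d/(2nε)) · (1 + B²/σ²) ). -/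
/-!
In each coordinate `j` the estimation error is `(1/n) Σᵢ (U_ij - θ_j) + W_j / (n a)`, a sum of
independent centred terms, so its second moment is the variance `σ²/n + (σ₀² + n σ_pri²)/(n a)²`.
Summing over the `d` coordinates and substituting `a² = (P - σ_pri²)/(B² + σ²)` and
`σ₀² + n σ_pri² = d (P - σ_pri²)/(2ε)` (the defining equation of `σ_pri²`) gives the closed form.
-/

open MeasureTheory ProbabilityTheory
open scoped NNReal ENNReal

section IidSum

variable {ι α : Type*} [Fintype ι] [MeasurableSpace α] {ν : Measure α} [IsProbabilityMeasure ν]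
  {X : α → ℝ}

lemma memLp_sum_comp_eval_pi {p : ℝ≥0∞} (hX : MemLp X p ν) :
    MemLp (fun u : ι → α ↦ ∑ i, X (u i)) p (Measure.pi fun _ ↦ ν) :=
  memLp_finsetSum _ fun i _ ↦ hX.comp_measurePreserving (measurePreserving_eval _ i)

lemma integral_sum_comp_eval_pi (hX : Integrable X ν) :
    ∫ u : ι → α, ∑ i, X (u i) ∂(Measure.pi fun _ ↦ ν) = Fintype.card ι * ∫ x, X x ∂ν := by
  have hlaw (i : ι) := (measurePreserving_eval (fun _ : ι ↦ ν) i).hasLaw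
  rw [integral_finsetSum _ fun i _ ↦ ((hlaw i).map_eq ▸ hX).comp_measurable (by fun_prop)]
  have hint (i : ι) : ∫ u : ι → α, X (u i) ∂(Measure.pi fun _ ↦ ν) = ∫ x, X x ∂ν :=
    (hlaw i).integral_comp hX.aestronglyMeasurable
  simp [hint]

lemma variance_sum_comp_eval_pi (hX : MemLp X 2 ν) :
    Var[fun u : ι → α ↦ ∑ i, X (u i); Measure.pi fun _ ↦ ν] = Fintype.card ι * Var[X; ν] := by
  simpa [Finset.sum_fn] using variance_sum_pi (μ := fun _ : ι ↦ ν) (fun _ ↦ hX)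

end IidSum

section Product

variable {α β : Type*} [MeasurableSpace α] [MeasurableSpace β] {μ : Measure α} {ν : Measure β}
  [IsProbabilityMeasure μ] [IsProbabilityMeasure ν] {f : α → ℝ} {g : β → ℝ}

lemma integral_add_comp_fst_snd (hf : Integrable f μ) (hg : Integrable g ν) :
    ∫ z, f z.1 + g z.2 ∂(μ.prod ν) = μ[f] + ν[g] := by
  rw [integral_add (hf.comp_fst ν) (hg.comp_snd μ), integral_fun_fst, integral_fun_snd]
  simp

lemma variance_add_comp_fst_snd (hf : MemLp f 2 μ) (hg : MemLp g 2 ν) :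
    Var[fun z ↦ f z.1 + g z.2; μ.prod ν] = Var[f; μ] + Var[g; ν] := by
  have hf' : MemLp (fun z : α × β ↦ f z.1) 2 (μ.prod ν) :=
    hf.comp_measurePreserving measurePreserving_fst
  have hg' : MemLp (fun z : α × β ↦ g z.2) 2 (μ.prod ν) :=
    hg.comp_measurePreserving measurePreserving_snd
  rw [IndepFun.variance_fun_add hf' hg'
    (indepFun_prod₀ hf.aestronglyMeasurable.aemeasurable hg.aestronglyMeasurable.aemeasurable),
    measurePreserving_fst.variance_fun_comp hf.aestronglyMeasurable.aemeasurable,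
    measurePreserving_snd.variance_fun_comp hg.aestronglyMeasurable.aemeasurable]

lemma integral_sq_add_comp_fst_snd_sub (hf : MemLp f 2 μ) (hg : MemLp g 2 ν) :
    ∫ z, (f z.1 + g z.2 - (μ[f] + ν[g])) ^ 2 ∂(μ.prod ν) = Var[f; μ] + Var[g; ν] := by
  have hfg : AEMeasurable (fun z : α × β ↦ f z.1 + g z.2) (μ.prod ν) :=
    hf.aestronglyMeasurable.aemeasurable.comp_fst.add
      hg.aestronglyMeasurable.aemeasurable.comp_snd
  rw [← integral_add_comp_fst_snd (hf.integrable one_le_two) (hg.integrable one_le_two),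
    ← variance_eq_integral hfg, variance_add_comp_fst_snd hf hg]

end Product

section Estimator

variable {ι α β : Type*} [Fintype ι] [MeasurableSpace α] [MeasurableSpace β]
  {ν : Measure α} {ρ : Measure β} [IsProbabilityMeasure ν] [IsProbabilityMeasure ρ]
  {X : α → ℝ} {W : β → ℝ} {a : ℝ}

lemma memLp_scaled_sum_estimator (hX : MemLp X 2 ν) (hW : MemLp W 2 ρ) :
    MemLp (fun z : (ι → α) × β ↦ (a * ∑ i, X (z.1 i) + W z.2) / (Fintype.card ι * a))
      2 ((Measure.pi fun _ ↦ ν).prod ρ) := by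
  simpa only [div_eq_inv_mul, Pi.add_apply, Function.comp_apply] using
    ((((memLp_sum_comp_eval_pi hX).const_mul a).comp_measurePreserving measurePreserving_fst).add
      (hW.comp_measurePreserving measurePreserving_snd)).const_mul (Fintype.card ι * a : ℝ)⁻¹

lemma integral_sq_scaled_sum_estimator_sub [Nonempty ι] (ha : a ≠ 0) (hX : MemLp X 2 ν)
    (hW : MemLp W 2 ρ) (hW0 : ρ[W] = 0) :
    ∫ z : (ι → α) × β, ((a * ∑ i, X (z.1 i) + W z.2) / (Fintype.card ι * a) - ν[X]) ^ 2
        ∂((Measure.pi fun _ ↦ ν).prod ρ)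
      = Var[X; ν] / Fintype.card ι + Var[W; ρ] / (Fintype.card ι * a) ^ 2 := by
  set N : ℝ := (Fintype.card ι : ℝ) with hN_def
  have hN : N ≠ 0 := by rw [hN_def]; positivity
  have hS := (memLp_sum_comp_eval_pi (ι := ι) hX).const_mul N⁻¹
  have hT := hW.const_mul (N * a)⁻¹
  have hsplit (z : (ι → α) × β) :
      (a * ∑ i, X (z.1 i) + W z.2) / (N * a) = N⁻¹ * ∑ i, X (z.1 i) + (N * a)⁻¹ * W z.2 := by
    field_simp
  have hmean : ν[X] = (Measure.pi fun _ : ι ↦ ν)[fun u ↦ N⁻¹ * ∑ i, X (u i)]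
      + ρ[fun w ↦ (N * a)⁻¹ * W w] := by
    rw [integral_const_mul, integral_const_mul, integral_sum_comp_eval_pi (hX.integrable one_le_two),
      ← hN_def, hW0, mul_zero, add_zero]
    field_simp
  simp_rw [hsplit]
  rw [hmean, integral_sq_add_comp_fst_snd_sub hS hT, variance_const_mul, variance_const_mul,
    variance_sum_comp_eval_pi hX, ← hN_def]
  field_simp

end Estimator

lemma integral_sum_sq_gaussian_scaled_sum_estimator_sub {ι κ : Type*} [Fintype ι] [Nonempty ι]
    [Fintype κ] (θ : κ → ℝ) (v₁ v₂ : ℝ≥0) {a : ℝ} (ha : a ≠ 0) :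
    ∫ z : (ι → κ → ℝ) × (κ → ℝ),
        ∑ j, ((a * ∑ i, z.1 i j + z.2 j) / (Fintype.card ι * a) - θ j) ^ 2
        ∂((Measure.pi fun _ : ι ↦ Measure.pi fun j ↦ gaussianReal (θ j) v₁).prod
          (Measure.pi fun _ : κ ↦ gaussianReal 0 v₂))
      = Fintype.card κ * (v₁ / Fintype.card ι + v₂ / (Fintype.card ι * a) ^ 2) := by
  have hU (j : κ) : HasLaw (fun y : κ → ℝ ↦ y j) (gaussianReal (θ j) v₁)
      (Measure.pi fun j ↦ gaussianReal (θ j) v₁) :=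
    (measurePreserving_eval (fun j ↦ gaussianReal (θ j) v₁) j).hasLaw
  have hW (j : κ) : HasLaw (fun w : κ → ℝ ↦ w j) (gaussianReal 0 v₂)
      (Measure.pi fun _ ↦ gaussianReal 0 v₂) :=
    (measurePreserving_eval (fun _ : κ ↦ gaussianReal 0 v₂) j).hasLaw
  have hmse (j : κ) := integral_sq_scaled_sum_estimator_sub (ι := ι) ha
    (hU j).hasGaussianLaw.memLp_two (hW j).hasGaussianLaw.memLp_two
    (by rw [(hW j).integral_eq, integral_id_gaussianReal])
  simp only [(hU _).integral_eq, (hU _).variance_eq, (hW _).variance_eq, integral_id_gaussianReal,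
    variance_id_gaussianReal] at hmse
  have hint (j : κ) : Integrable
      (fun z : (ι → κ → ℝ) × (κ → ℝ) ↦
        ((a * ∑ i, z.1 i j + z.2 j) / (Fintype.card ι * a) - θ j) ^ 2)
      ((Measure.pi fun _ : ι ↦ Measure.pi fun j ↦ gaussianReal (θ j) v₁).prod
        (Measure.pi fun _ : κ ↦ gaussianReal 0 v₂)) :=
    ((memLp_scaled_sum_estimator (hU j).hasGaussianLaw.memLp_two
      (hW j).hasGaussianLaw.memLp_two).sub (memLp_const (θ j))).integrable_sq
  rw [integral_finsetSum _ fun j _ ↦ hint j]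
  simp only [hmse, Finset.sum_const, Finset.card_univ, nsmul_eq_mul]

theorem robust_gaussian_ota_risk_eq_general
    (σ B P σ₀ ε : ℝ) (hσ : 0 < σ) (hP : 0 < P) (hε : 0 < ε)
    (n d : ℕ) (hn : 1 ≤ n)
    (σpri2 a : ℝ)
    (hσpri : σpri2 = ((d : ℝ) * P - 2 * ε * σ₀ ^ 2) / (2 * ε * n + d))
    (ha : a = Real.sqrt ((P - σpri2) / (B ^ 2 + σ ^ 2)))
    (θ : Fin d → ℝ) :
    (∫ p : (Fin n → Fin d → ℝ) × (Fin d → ℝ),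
        ∑ j, ((a * ∑ i, p.1 i j + p.2 j) / ((n : ℝ) * a) - θ j) ^ 2
      ∂((Measure.pi fun _ : Fin n =>
            Measure.pi fun j : Fin d => gaussianReal (θ j) (σ ^ 2).toNNReal).prod
          (Measure.pi fun _ : Fin d =>
            gaussianReal 0 (σ₀ ^ 2 + (n : ℝ) * σpri2).toNNReal)))
      = ((d : ℝ) * σ ^ 2 / n) *
          (1 + ((d : ℝ) / (2 * (n : ℝ) * ε)) * (1 + B ^ 2 / σ ^ 2)) := by
  have hn0 : (0 : ℝ) < n := by exact_mod_cast hn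
  have : Nonempty (Fin n) := ⟨⟨0, hn⟩⟩
  have hgap : P - σpri2 = 2 * ε * (n * P + σ₀ ^ 2) / (2 * ε * n + d) := by
    rw [hσpri]; field_simp; ring
  have hgap_pos : 0 < P - σpri2 := by
    rw [hgap]; have := mul_pos hn0 hP; positivity
  have hnoise : σ₀ ^ 2 + n * σpri2 = d * (P - σpri2) / (2 * ε) := by
    rw [hσpri]; field_simp; ring
  have ha2 : a ^ 2 = (P - σpri2) / (B ^ 2 + σ ^ 2) := by
    rw [ha, Real.sq_sqrt (by positivity)]
  have ha0 : a ≠ 0 := by rw [ha]; positivity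
  have hmse := integral_sum_sq_gaussian_scaled_sum_estimator_sub (ι := Fin n) θ (σ ^ 2).toNNReal
    (σ₀ ^ 2 + (n : ℝ) * σpri2).toNNReal ha0
  simp only [Fintype.card_fin] at hmse
  rw [hmse, Real.coe_toNNReal _ (sq_nonneg σ), Real.coe_toNNReal _ (by rw [hnoise]; positivity),
    hnoise, mul_pow, ha2]
  field_simp
  ring

/-- Corollary 1. The ε-robust over-the-air scheme for the Gaussian
location model: with `σ_pri² = (dP − 2εσ₀²)/(2εn + d)`, `a = √((P − σ_pri²)/(B² + σ²))`,
`Y_j = a Σ_i U_{ij} + W_j` where `U_{ij} ~ N(θ_j, σ²)` and `W_j ~ N(0, σ₀² + nσ_pri²)` are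
all independent, and `θ̂_j = Y_j/(na)`, the mean squared error equals
`(dσ²/n)(1 + (d/(2nε))(1 + B²/σ²))`. -/
theorem robust_gaussian_ota_risk_eq
    (σ B P σ₀ ε : ℝ) (hσ : 0 < σ) (hB : 0 < B) (hP : 0 < P) (hσ₀ : 0 < σ₀) (hε : 0 < ε)
    (n d : ℕ) (hn : 1 ≤ n) (hd : 1 ≤ d)
    (hpow : (d : ℝ) * P ≥ 2 * ε * σ₀ ^ 2)
    (σpri2 a : ℝ)
    (hσpri : σpri2 = ((d : ℝ) * P - 2 * ε * σ₀ ^ 2) / (2 * ε * n + d))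
    (ha : a = Real.sqrt ((P - σpri2) / (B ^ 2 + σ ^ 2)))
    (θ : Fin d → ℝ) :
    (∫ p : (Fin n → Fin d → ℝ) × (Fin d → ℝ),
        ∑ j, ((a * ∑ i, p.1 i j + p.2 j) / ((n : ℝ) * a) - θ j) ^ 2
      ∂((Measure.pi fun _ : Fin n =>
            Measure.pi fun j : Fin d => gaussianReal (θ j) (σ ^ 2).toNNReal).prod
          (Measure.pi fun _ : Fin d =>
            gaussianReal 0 (σ₀ ^ 2 + (n : ℝ) * σpri2).toNNReal)))
      = ((d : ℝ) * σ ^ 2 / n) *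
          (1 + ((d : ℝ) / (2 * (n : ℝ) * ε)) * (1 + B ^ 2 / σ ^ 2)) :=
  robust_gaussian_ota_risk_eq_general σ B P σ₀ ε hσ hP hε n d hn σpri2 a hσpri ha θ
end
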